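/- arXiv:1907.02623 — 5 statements merged into one kernel-verified Lean document; each statement's English description precedes it below -/
import Mathlib

section
/- Let q be a prime power with q ≡ 3 (mod 4), let F be a finite field with q² elements, and fix a primitive element ω of F. For i ∈ {0,1,2,3}, let Dᵢ = Cᵢ⁽⁴⁾ ∪ C₍ᵢ₊₁ mod 4₎⁽⁴⁾. Then each Dᵢ is a Paley type partial difference set in (F,+): |Dᵢ| = (q²−1)/2, and for every nonzero x ∈ F, the number of pairs (u,v) ∈ Dᵢ × Dᵢ with u − v = x equals (q²−5)/4 if x ∈ Dᵢ and equals (q²−1)/4 if x ∉ Dᵢ. -/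
/-- The number of pairs `(u, v) ∈ A × B` with `u - v = g`. -/
noncomputable def diffCount {G : Type*} [AddGroup G] (A B : Set G) (g : G) : ℕ :=
  Set.ncard {p : G × G | p.1 ∈ A ∧ p.2 ∈ B ∧ p.1 - p.2 = g}

/-- The `N`-th cyclotomic class `C_i^{(N)} = {ω^(i+Nk) : k ∈ ℤ}`. -/
def cyc {F : Type*} [Field F] (ω : F) (N : ℕ) (i : ℤ) : Set F :=
  {x : F | ∃ k : ℤ, x = ω ^ (i + (N : ℤ) * k)}

/-!
Let `L : Fˣ → ZMod 4` be the discrete logarithm of `ω` modulo 4, so that `C_r = L⁻¹(r)`, and put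
`f = (q² - 1)/4 = |C_r|`. Scaling by `x⁻¹` turns the pairs of `D_i` with difference `x` into the
`w` with `w, 1 + w ∈ C_d ∪ C_{d+1}`, `d = i - L x`, so the count is the block sum of the four
cyclotomic numbers `(r, s) = #{w ∈ C_r | 1 + w ∈ C_s}` with `r, s ∈ {d, d + 1}`.
Since `8 ∣ q² - 1` we have `-1 ∈ C_0`, and since `q ≡ -1 (mod 4)` the Frobenius `x ↦ x ^ q` maps
`C_r` to `C_{-r}`; with `w ↦ -1 - w` and `w ↦ w⁻¹` this gives
`(r, s) = (s, r) = (-r, s - r) = (-r, -s)`. Together with the row sums `∑ₛ (r, s) = f - [r = 0]`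
these force every block sum to be `f - 1` when `d ∈ {0, 3}`, i.e. `x ∈ D_i`, and `f` otherwise.
-/

open Finset

theorem diffCount_eq_ncard {G : Type*} [AddGroup G] (A B : Set G) (g : G) :
    diffCount A B g = {v | v ∈ B ∧ g + v ∈ A}.ncard := by
  have himage : {p : G × G | p.1 ∈ A ∧ p.2 ∈ B ∧ p.1 - p.2 = g} =
      (fun v ↦ (g + v, v)) '' {v | v ∈ B ∧ g + v ∈ A} := by
    ext ⟨u, v⟩
    simp only [Set.mem_ofPred_eq, Set.mem_image, Prod.mk.injEq]
    constructor
    · rintro ⟨hu, hv, rfl⟩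
      exact ⟨v, ⟨hv, by rwa [sub_add_cancel]⟩, sub_add_cancel u v, rfl⟩
    · rintro ⟨v, ⟨hv, hvg⟩, rfl, rfl⟩
      exact ⟨hvg, hv, add_sub_cancel_right g v⟩
  rw [diffCount, himage, Set.ncard_image_of_injective]
  exact fun a b h ↦ congrArg Prod.snd h

theorem FiniteField.isPrimitiveRoot_of_forall_eq_pow {F : Type*} [Field F] [Fintype F] {ω : F}
    (hF : 2 < Fintype.card F) (hω : ∀ x : F, x ≠ 0 → ∃ k : ℕ, x = ω ^ k) :
    IsPrimitiveRoot ω (Fintype.card F - 1) := by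
  classical
  have hω0 : ω ≠ 0 := by
    rintro rfl
    have hsub : (univ : Finset F) ⊆ {0, 1} := fun x _ ↦ by
      obtain hx | hx := eq_or_ne x 0
      · simp [hx]
      · obtain ⟨k, rfl⟩ := hω x hx
        rcases k with _ | k <;> simp
    have := (card_le_card hsub).trans card_le_two
    rw [card_univ] at this
    omega
  have hgen (y : Fˣ) : y ∈ Subgroup.zpowers (Units.mk0 ω hω0) := by
    obtain ⟨k, hk⟩ := hω y y.ne_zero
    exact ⟨k, Units.ext (by simp [hk])⟩
  rw [IsPrimitiveRoot.iff_orderOf, ← Fintype.card_units, ← Nat.card_eq_fintype_card,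
    ← orderOf_eq_card_of_forall_mem_zpowers hgen, ← orderOf_units, Units.val_mk0]

theorem FiniteField.exists_ringHom_eq_pow {F : Type*} [Field F] [Fintype F] {q k : ℕ}
    (hq : IsPrimePow q) (hF : Fintype.card F = q ^ k) : ∃ σ : F →+* F, ∀ x, σ x = x ^ q := by
  obtain ⟨p, e, hp, -, rfl⟩ := hq
  have := Fact.mk hp.nat_prime
  have : CharP F p := charP_of_card_eq_prime_pow (f := e * k) (by rw [hF, pow_mul])
  exact ⟨iterateFrobenius F p e, iterateFrobenius_def p e⟩

namespace Cyclotomic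

variable {F : Type*} [Field F] {n : ℕ} {L : F → ZMod n}

/-- `L` plays the role of a discrete logarithm modulo `n`: its fibres `cls L r` on `Fˣ` are the
cyclotomic classes of order `n`. -/
def IsZModLog (L : F → ZMod n) : Prop :=
  ∀ ⦃x y : F⦄, x ≠ 0 → y ≠ 0 → L (x * y) = L x + L y

namespace IsZModLog

theorem map_one (hL : IsZModLog L) : L 1 = 0 := by
  simpa using hL one_ne_zero one_ne_zero

theorem map_inv (hL : IsZModLog L) {x : F} (hx : x ≠ 0) : L x⁻¹ = -L x := by
  have h := hL hx (inv_ne_zero hx)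
  rw [mul_inv_cancel₀ hx, hL.map_one] at h
  exact eq_neg_of_add_eq_zero_right h.symm

theorem map_pow (hL : IsZModLog L) {x : F} (hx : x ≠ 0) (k : ℕ) : L (x ^ k) = k * L x := by
  induction k with
  | zero => simpa using hL.map_one
  | succ k ih => rw [pow_succ, hL (pow_ne_zero k hx) hx, ih]; push_cast; ring

theorem map_neg (hL : IsZModLog L) (hneg : L (-1) = 0) {x : F} (hx : x ≠ 0) : L (-x) = L x := by
  rw [← neg_one_mul, hL (neg_ne_zero.mpr one_ne_zero) hx, hneg, zero_add]

end IsZModLog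

theorem isZModLog_of_forall_eq_pow {ω : F} (hω : ∀ x : F, x ≠ 0 → ∃ k : ℕ, x = ω ^ k)
    (hL : ∀ m : ℤ, L (ω ^ m) = m) : IsZModLog L := by
  intro x y hx hy
  obtain ⟨a, rfl⟩ := hω x hx
  obtain ⟨b, rfl⟩ := hω y hy
  rw [← pow_add]
  simp only [← zpow_natCast, hL]
  push_cast
  rfl

theorem exists_zmodLog {ω : F} {N : ℕ} (hprim : IsPrimitiveRoot ω N) (hN : 0 < N) (hn : n ∣ N) :
    ∃ L : F → ZMod n, ∀ m : ℤ, L (ω ^ m) = m := by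
  refine ⟨fun x ↦ ((Classical.epsilon fun m : ℤ ↦ ω ^ m = x : ℤ) : ZMod n), fun m ↦ ?_⟩
  have hω0 : ω ≠ 0 := hprim.ne_zero hN.ne'
  have hspec : ω ^ (Classical.epsilon fun k : ℤ ↦ ω ^ k = ω ^ m) = ω ^ m :=
    Classical.epsilon_spec (p := fun k : ℤ ↦ ω ^ k = ω ^ m) ⟨m, rfl⟩
  rw [← div_eq_one_iff_eq (zpow_ne_zero _ hω0), ← zpow_sub₀ hω0, hprim.zpow_eq_one_iff_dvd]
    at hspec
  exact (ZMod.intCast_eq_intCast_iff_dvd_sub _ _ _).mpr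
    (dvd_sub_comm.mp ((Int.natCast_dvd_natCast.mpr hn).trans hspec))

theorem zmodLog_neg_one {ω : F} {N : ℕ} (hprim : IsPrimitiveRoot ω N) (hN : 0 < N)
    (hn : 2 * n ∣ N) (hL : ∀ m : ℤ, L (ω ^ m) = m) : L (-1) = 0 := by
  obtain ⟨c, hc⟩ := hn
  have h := (hprim.pow (a := n * c) hN (by rw [hc]; ring)).eq_neg_one_of_two_right
  rw [← h, ← zpow_natCast, hL]
  simp

variable [Fintype F] [DecidableEq F]

variable (L) in
def cls (r : ZMod n) : Finset F := {x | x ≠ 0 ∧ L x = r}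

@[simp]
theorem mem_cls {r : ZMod n} {x : F} : x ∈ cls L r ↔ x ≠ 0 ∧ L x = r := by
  simp [cls]

theorem cyc_eq_coe_cls {ω : F} (hω0 : ω ≠ 0)
    (hω : ∀ x : F, x ≠ 0 → ∃ k : ℕ, x = ω ^ k) (hL : ∀ m : ℤ, L (ω ^ m) = m) (z : ℤ) :
    cyc ω n z = cls L z := by
  ext x
  simp only [cyc, Set.mem_ofPred_eq, mem_coe, mem_cls]
  constructor
  · rintro ⟨k, rfl⟩
    refine ⟨zpow_ne_zero _ hω0, ?_⟩
    simp [hL]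
  · rintro ⟨hx, hLx⟩
    obtain ⟨k, rfl⟩ := hω x hx
    rw [← zpow_natCast, hL, ZMod.intCast_eq_intCast_iff_dvd_sub] at hLx
    obtain ⟨c, hc⟩ := hLx
    exact ⟨-c, by rw [← zpow_natCast]; congr 1; linear_combination -hc⟩

variable (L) in
def cycNum (r s : ZMod n) : ℕ := #{w ∈ cls L r | 1 + w ∈ cls L s}

theorem cycNum_comm (hL : IsZModLog L) (hneg : L (-1) = 0) (r s : ZMod n) :
    cycNum L r s = cycNum L s r := by
  have key (r s : ZMod n) : Set.MapsTo (fun w : F ↦ -(1 + w))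
      ({w ∈ cls L r | 1 + w ∈ cls L s} : Finset F)
      ({w ∈ cls L s | 1 + w ∈ cls L r} : Finset F) := by
    intro w hw
    simp only [mem_coe, mem_filter, mem_cls] at hw ⊢
    obtain ⟨⟨hw, hwr⟩, hw1, hws⟩ := hw
    rw [show 1 + -(1 + w) = -w by ring, hL.map_neg hneg hw1, hL.map_neg hneg hw]
    exact ⟨⟨neg_ne_zero.mpr hw1, hws⟩, neg_ne_zero.mpr hw, hwr⟩
  exact card_nbij' _ _ (key r s) (key s r) (fun w _ ↦ by ring) (fun w _ ↦ by ring)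

theorem cycNum_eq_neg_sub (hL : IsZModLog L) (r s : ZMod n) :
    cycNum L r s = cycNum L (-r) (s - r) := by
  have key (r s : ZMod n) : Set.MapsTo (fun w : F ↦ w⁻¹)
      ({w ∈ cls L r | 1 + w ∈ cls L s} : Finset F)
      ({w ∈ cls L (-r) | 1 + w ∈ cls L (s - r)} : Finset F) := by
    intro w hw
    simp only [mem_coe, mem_filter, mem_cls] at hw ⊢
    obtain ⟨⟨hw, hwr⟩, hw1, hws⟩ := hw
    have h1 : 1 + w⁻¹ = w⁻¹ * (1 + w) := by field_simp; ring
    rw [h1, hL (inv_ne_zero hw) hw1, hL.map_inv hw, hwr, hws]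
    exact ⟨⟨inv_ne_zero hw, rfl⟩, mul_ne_zero (inv_ne_zero hw) hw1, by ring⟩
  refine card_nbij' _ _ (key r s) ?_ (fun w _ ↦ inv_inv w) (fun w _ ↦ inv_inv w)
  simpa using key (-r) (s - r)

theorem cycNum_le_neg_neg (σ : F →+* F) (hσ : ∀ x : F, x ≠ 0 → L (σ x) = -L x)
    (r s : ZMod n) : cycNum L r s ≤ cycNum L (-r) (-s) := by
  refine card_le_card_of_injOn σ (fun w hw ↦ ?_) σ.injective.injOn
  simp only [mem_coe, mem_filter, mem_cls] at hw ⊢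
  obtain ⟨⟨hw, hwr⟩, hw1, hws⟩ := hw
  rw [← map_one σ, ← map_add, hσ _ hw, hσ _ hw1, hwr, hws]
  exact ⟨⟨(map_ne_zero σ).mpr hw, rfl⟩, (map_ne_zero σ).mpr hw1, rfl⟩

theorem cycNum_neg_neg (σ : F →+* F) (hσ : ∀ x : F, x ≠ 0 → L (σ x) = -L x)
    (r s : ZMod n) : cycNum L r s = cycNum L (-r) (-s) :=
  (cycNum_le_neg_neg σ hσ r s).antisymm <| by simpa using cycNum_le_neg_neg σ hσ (-r) (-s)

theorem mem_biUnion_cls {T : Finset (ZMod n)} {x : F} :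
    x ∈ T.biUnion (cls L) ↔ x ≠ 0 ∧ L x ∈ T := by
  simp only [mem_biUnion, mem_cls]
  exact ⟨fun ⟨r, hr, hx, hxr⟩ ↦ ⟨hx, hxr ▸ hr⟩, fun ⟨hx, hxT⟩ ↦ ⟨L x, hxT, hx, rfl⟩⟩

theorem cyc_union_cyc_eq_coe_biUnion_cls {ω : F} (hω0 : ω ≠ 0)
    (hω : ∀ x : F, x ≠ 0 → ∃ k : ℕ, x = ω ^ k) (hL : ∀ m : ℤ, L (ω ^ m) = m) (a b : ℤ) :
    cyc ω n a ∪ cyc ω n b =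
      ↑(({(a : ZMod n), (b : ZMod n)} : Finset (ZMod n)).biUnion (cls L)) := by
  ext x
  simp only [cyc_eq_coe_cls hω0 hω hL, Set.mem_union, mem_coe, mem_cls, mem_biUnion_cls,
    mem_insert, mem_singleton]
  tauto

theorem card_filter_biUnion_cls (T S : Finset (ZMod n)) :
    #{w ∈ T.biUnion (cls L) | 1 + w ∈ S.biUnion (cls L)} = ∑ r ∈ T, ∑ s ∈ S, cycNum L r s := by
  rw [← sum_product', card_eq_sum_card_fiberwise (f := fun w ↦ (L w, L (1 + w))) (t := T ×ˢ S)]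
  · refine sum_congr rfl fun ⟨r, s⟩ _ ↦ congrArg card (ext fun w ↦ ?_)
    simp only [mem_filter, mem_biUnion_cls, mem_cls, Prod.mk.injEq]
    grind
  · intro w hw
    rw [mem_coe, mem_filter, mem_biUnion_cls, mem_biUnion_cls] at hw
    exact mem_product.mpr ⟨hw.1.2, hw.2.2⟩

variable [NeZero n]

theorem sum_cycNum_add_ite (r : ZMod n) :
    ∑ s, cycNum L r s + (if L (-1) = r then 1 else 0) = #(cls L r) := by
  have hsum : #{w ∈ cls L r | 1 + w ≠ 0} = ∑ s, cycNum L r s := by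
    rw [card_eq_sum_card_fiberwise (f := fun w ↦ L (1 + w)) (t := univ) (fun _ _ ↦ mem_univ _)]
    refine sum_congr rfl fun s _ ↦ ?_
    simp only [cycNum, filter_filter, mem_cls]
  have hneg : #{w ∈ cls L r | ¬1 + w ≠ 0} = if L (-1) = r then 1 else 0 := by
    have hw (w : F) : ¬1 + w ≠ 0 ↔ w = -1 := by rw [not_not, add_comm, add_eq_zero_iff_eq_neg]
    simp only [hw, filter_eq', mem_cls, ne_eq, neg_eq_zero, one_ne_zero, not_false_eq_true,
      true_and]
    split_ifs <;> rfl
  rw [← hsum, ← hneg, card_filter_add_card_filter_not]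

theorem diffCount_biUnion_cls (hL : IsZModLog L) (T : Finset (ZMod n)) {x : F} (hx : x ≠ 0) :
    diffCount (T.biUnion (cls L) : Set F) (T.biUnion (cls L)) x =
      ∑ r with r + L x ∈ T, ∑ s with s + L x ∈ T, cycNum L r s := by
  have hscale (w : F) :
      x * w ∈ T.biUnion (cls L) ↔ w ∈ ({r | r + L x ∈ T} : Finset (ZMod n)).biUnion (cls L) := by
    simp only [mem_biUnion_cls, mem_filter, mem_univ, true_and, mul_ne_zero_iff, ne_eq, hx,
      not_false_eq_true]
    exact and_congr_right fun hw ↦ by rw [hL hx hw, add_comm]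
  rw [diffCount_eq_ncard, ← card_filter_biUnion_cls]
  simp only [mem_coe]
  rw [← coe_filter, Set.ncard_coe_finset]
  refine card_nbij' (x⁻¹ * ·) (x * ·) (fun v hv ↦ ?_) (fun w hw ↦ ?_)
    (fun v _ ↦ mul_inv_cancel_left₀ hx v) (fun w _ ↦ inv_mul_cancel_left₀ hx w)
  · simp only [mem_coe, mem_filter, ← hscale, mul_add, mul_one, mul_inv_cancel_left₀ hx] at hv ⊢
    exact hv
  · simp only [mem_coe, mem_filter, ← hscale, ← mul_one_add x] at hw ⊢
    exact hw

theorem card_cls_eq_card_cls_zero (hL : IsZModLog L) {ω : F} (hω : ω ≠ 0) (hLω : L ω = 1)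
    (r : ZMod n) : #(cls L r) = #(cls L 0) := by
  have hstep (r : ZMod n) : #(cls L r) = #(cls L (r + 1)) := by
    refine card_nbij' (ω * ·) (ω⁻¹ * ·) (fun x hx ↦ ?_) (fun x hx ↦ ?_)
      (fun x _ ↦ inv_mul_cancel_left₀ hω x) (fun x _ ↦ mul_inv_cancel_left₀ hω x)
    · simp only [mem_coe, mem_cls] at hx ⊢
      rw [hL hω hx.1, hLω, hx.2, add_comm]
      exact ⟨mul_ne_zero hω hx.1, rfl⟩
    · simp only [mem_coe, mem_cls] at hx ⊢
      rw [hL (inv_ne_zero hω) hx.1, hL.map_inv hω, hLω, hx.2]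
      exact ⟨mul_ne_zero (inv_ne_zero hω) hx.1, by ring⟩
  have hnat (k : ℕ) : #(cls L (k : ZMod n)) = #(cls L 0) := by
    induction k with
    | zero => simp
    | succ k ih => rw [Nat.cast_succ, ← hstep, ih]
  simpa using hnat r.val

theorem card_mul_card_cls_zero (hL : IsZModLog L) {ω : F} (hω : ω ≠ 0) (hLω : L ω = 1) :
    n * #(cls L 0) = Fintype.card F - 1 := by
  have hunion : (univ : Finset (ZMod n)).biUnion (cls L) = univ.erase 0 := by
    ext x; simp
  rw [← card_univ, ← card_erase_of_mem (mem_univ 0), ← hunion, card_biUnion]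
  · simp [card_cls_eq_card_cls_zero hL hω hLω]
  · intro r _ s _ hrs
    simp only [Function.onFun, disjoint_left, mem_cls]
    exact fun x hr hs ↦ hrs (hr.2.symm.trans hs.2)

section Quartic

variable {L : F → ZMod 4} {f : ℕ}

theorem cycNum_block (hL : IsZModLog L) (hneg : L (-1) = 0) (σ : F →+* F)
    (hσ : ∀ x : F, x ≠ 0 → L (σ x) = -L x) (hcard : ∀ r, #(cls L r) = f) (d : ZMod 4) :
    ∑ r ∈ {d, d + 1}, ∑ s ∈ {d, d + 1}, cycNum L r s + (if d = 0 ∨ d = 3 then 1 else 0) = f := by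
  -- The symmetries reduce the sixteen numbers to `(0,0)`, `A = (0,1)`, `B = (1,2)`, `C = (0,2)`;
  -- rows 1 and 2 then read `2A + 2B = f = 2B + 2C`, so `A = C`.
  have comm := cycNum_comm hL hneg
  have negSub := cycNum_eq_neg_sub hL
  have negNeg := cycNum_neg_neg σ hσ
  have row (r : ZMod 4) :
      cycNum L r 0 + cycNum L r 1 + cycNum L r 2 + cycNum L r 3 + (if 0 = r then 1 else 0) = f := by
    rw [← hcard r, ← sum_cycNum_add_ite, hneg]
    exact congrArg (· + _) (Fin.sum_univ_four _).symm
  have r0 : cycNum L 0 0 + cycNum L 0 1 + cycNum L 0 2 + cycNum L 0 3 + 1 = f := row 0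
  have r1 : cycNum L 1 0 + cycNum L 1 1 + cycNum L 1 2 + cycNum L 1 3 + 0 = f := row 1
  have r2 : cycNum L 2 0 + cycNum L 2 1 + cycNum L 2 2 + cycNum L 2 3 + 0 = f := row 2
  have e10 : cycNum L 1 0 = cycNum L 0 1 := comm 1 0
  have e33 : cycNum L 3 3 = cycNum L 0 1 := (negSub 3 3).trans e10
  have e03 : cycNum L 0 3 = cycNum L 0 1 := negNeg 0 3
  have e30 : cycNum L 3 0 = cycNum L 0 1 := (comm 3 0).trans e03
  have e11 : cycNum L 1 1 = cycNum L 0 1 := (negSub 1 1).trans e30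
  have e20 : cycNum L 2 0 = cycNum L 0 2 := comm 2 0
  have e22 : cycNum L 2 2 = cycNum L 0 2 := (negSub 2 2).trans e20
  have e21 : cycNum L 2 1 = cycNum L 1 2 := comm 2 1
  have e31 : cycNum L 3 1 = cycNum L 1 2 := negSub 3 1
  have e13 : cycNum L 1 3 = cycNum L 1 2 := (comm 1 3).trans e31
  have e32 : cycNum L 3 2 = cycNum L 1 2 := negNeg 3 2
  have e23 : cycNum L 2 3 = cycNum L 1 2 := (comm 2 3).trans e32
  have hd : d ≠ d + 1 := by revert d; decide
  rw [sum_pair hd, sum_pair hd, sum_pair hd]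
  obtain rfl | rfl | rfl | rfl : d = 0 ∨ d = 1 ∨ d = 2 ∨ d = 3 := by revert d; decide
  · change cycNum L 0 0 + cycNum L 0 1 + (cycNum L 1 0 + cycNum L 1 1) + 1 = f
    omega
  · change cycNum L 1 1 + cycNum L 1 2 + (cycNum L 2 1 + cycNum L 2 2) + 0 = f
    omega
  · change cycNum L 2 2 + cycNum L 2 3 + (cycNum L 3 2 + cycNum L 3 3) + 0 = f
    omega
  · change cycNum L 3 3 + cycNum L 3 0 + (cycNum L 0 3 + cycNum L 0 0) + 1 = f
    omega

theorem card_biUnion_cls_pair (hcard : ∀ r, #(cls L r) = f) (i : ZMod 4) :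
    #(({i, i + 1} : Finset (ZMod 4)).biUnion (cls L)) = 2 * f := by
  rw [card_biUnion, sum_pair (by revert i; decide), hcard, hcard, two_mul]
  intro r _ s _ hrs
  simp only [Function.onFun, disjoint_left, mem_cls]
  exact fun x hr hs ↦ hrs (hr.2.symm.trans hs.2)

theorem diffCount_biUnion_cls_pair_add_ite (hL : IsZModLog L) (hneg : L (-1) = 0)
    (σ : F →+* F) (hσ : ∀ x : F, x ≠ 0 → L (σ x) = -L x) (hcard : ∀ r, #(cls L r) = f)
    (i : ZMod 4) {x : F} (hx : x ≠ 0) :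
    let D := ({i, i + 1} : Finset (ZMod 4)).biUnion (cls L)
    diffCount (D : Set F) D x + (if x ∈ D then 1 else 0) = f := by
  intro D
  have hmem : x ∈ D ↔ i - L x = 0 ∨ i - L x = 3 := by
    rw [mem_biUnion_cls, mem_insert, mem_singleton, and_iff_right hx]
    generalize L x = a
    revert a i; decide
  have hshift : ({r | r + L x ∈ ({i, i + 1} : Finset (ZMod 4))} : Finset (ZMod 4)) =
      {i - L x, i - L x + 1} := by
    ext r
    simp only [mem_filter, mem_univ, true_and, mem_insert, mem_singleton]
    rw [← eq_sub_iff_add_eq, ← eq_sub_iff_add_eq, sub_add_eq_add_sub]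
  rw [diffCount_biUnion_cls hL _ hx, hshift, ← cycNum_block hL hneg σ hσ hcard (i - L x)]
  simp only [hmem]

end Quartic

end Cyclotomic

open Cyclotomic in
theorem stmt_2 (q : ℕ) (hq : IsPrimePow q) (h4 : q % 4 = 3)
    (F : Type*) [Field F] [Fintype F] (hF : Fintype.card F = q ^ 2)
    (ω : F) (hω : ∀ x : F, x ≠ 0 → ∃ k : ℕ, x = ω ^ k) :
    ∀ i : Fin 4,
      (cyc ω 4 (i : ℕ) ∪ cyc ω 4 ((i : ℕ) + 1)).ncard = (q ^ 2 - 1) / 2 ∧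
      ∀ x : F, x ≠ 0 →
        (x ∈ cyc ω 4 (i : ℕ) ∪ cyc ω 4 ((i : ℕ) + 1) →
          diffCount (cyc ω 4 (i : ℕ) ∪ cyc ω 4 ((i : ℕ) + 1))
            (cyc ω 4 (i : ℕ) ∪ cyc ω 4 ((i : ℕ) + 1)) x = (q ^ 2 - 5) / 4) ∧
        (x ∉ cyc ω 4 (i : ℕ) ∪ cyc ω 4 ((i : ℕ) + 1) →
          diffCount (cyc ω 4 (i : ℕ) ∪ cyc ω 4 ((i : ℕ) + 1))
            (cyc ω 4 (i : ℕ) ∪ cyc ω 4 ((i : ℕ) + 1)) x = (q ^ 2 - 1) / 4) := by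
  classical
  have h8 : 8 ∣ q ^ 2 - 1 := Nat.eight_dvd_sq_sub_one_of_odd (Nat.odd_iff.mpr (by omega))
  have h9 : 3 ^ 2 ≤ q ^ 2 := Nat.pow_le_pow_left (by omega) 2
  have hprim := FiniteField.isPrimitiveRoot_of_forall_eq_pow (by omega) hω
  rw [hF] at hprim
  have hω0 : ω ≠ 0 := hprim.ne_zero (by omega)
  obtain ⟨L, hLpow⟩ := exists_zmodLog (n := 4) hprim (by omega) (dvd_trans ⟨2, rfl⟩ h8)
  have hL := isZModLog_of_forall_eq_pow hω hLpow
  have hneg := zmodLog_neg_one hprim (by omega) h8 hLpow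
  have hLω : L ω = 1 := by simpa using hLpow 1
  obtain ⟨σ, hσ⟩ := FiniteField.exists_ringHom_eq_pow hq hF
  have hLσ (x : F) (hx : x ≠ 0) : L (σ x) = -L x := by
    rw [hσ, hL.map_pow hx, ← ZMod.natCast_mod, h4]
    exact neg_one_mul _
  have hcard := card_cls_eq_card_cls_zero hL hω0 hLω
  have hf := card_mul_card_cls_zero hL hω0 hLω
  rw [hF] at hf
  intro i
  rw [cyc_union_cyc_eq_coe_biUnion_cls hω0 hω hLpow, Int.cast_add, Int.cast_one,
    Set.ncard_coe_finset, card_biUnion_cls_pair hcard]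
  refine ⟨by omega, fun x hx ↦ ?_⟩
  have hdiff := diffCount_biUnion_cls_pair_add_ite hL hneg σ hLσ hcard (((i : ℕ) : ℤ) : ZMod 4) hx
  constructor <;> intro hxD <;> rw [mem_coe] at hxD <;>
    simp only [hxD, if_true, if_false] at hdiff <;> omega
end

section
/- Let q = 8m + 3 be a prime power, let F be a finite field with q² elements with primitive element ω, and let Lᵢ = Cᵢ⁽q⁺¹⁾ (indices mod q+1). Let I ⊆ {0,1,…,7} with |I| = 3 such that I contains exactly one odd element or exactly one even element, call it y, and set J₁ = {y + 2 + 4i mod (q+1) : 0 ≤ i ≤ m−1}, J₂ = {y + 4i mod (q+1) : 0 ≤ i ≤ m−1}. Define (cyclotomic indices mod 8): E₀ = (⋃_{i∈I} Cᵢ⁽⁸⁾) ∪ (⋃_{j∈J₁} Lⱼ), E₁ = (⋃_{i∈I} C₍ᵢ₊₂₎⁽⁸⁾) ∪ (⋃_{j∈J₂} Lⱼ), E₂ = (⋃_{i∈I} C₍ᵢ₊₁₎⁽⁸⁾) ∪ (⋃_{j∈J₁} L₍ⱼ₊₁₎), E₃ = (⋃_{i∈I} C₍ᵢ₊₃₎⁽⁸⁾)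 ∪ (⋃_{j∈J₂} L₍ⱼ₊₁₎). Then for every x ∈ F: N(E₀,E₁;x) + N(E₁,E₀;x) + N(E₂,E₃;x) + N(E₃,E₂;x) = Σ_{h∈{0,1}} Σ_{i∈I} Σ_{j∈I} ( N(C₍ᵢ₊ₕ₎⁽⁸⁾, C₍ⱼ₊₂₊ₕ₎⁽⁸⁾; x) + N(C₍ᵢ₊₂₊ₕ₎⁽⁸⁾, C₍ⱼ₊ₕ₎⁽⁸⁾; x) ) + z(x), where z(0) = 8m(4m+1) and z(x) = m(28m+5) for x ≠ 0. -/
/-!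
Adjoining `0` to `L_j = C_j^{(q+1)}` gives the `𝔽_q`-line `ω^j 𝔽_q` of `F`, an additive subgroup
of order `q`, and two distinct such lines are complementary subgroups of `F`. Hence for `x ≠ 0`,
`N(L_a, L_a; x)` is `q - 2` or `0` according as `x ∈ L_a` or not, and for `a ≠ b` it is
`1 - [x ∈ L_a] - [x ∈ L_b]`; summing gives `N(A, B; x)` in closed form for unions `A`, `B` of
lines. The classes `C_i^{(8)}` are not unions of lines, but `q ≡ 3 (mod 8)` gives
`-C_i^{(8)} = C_{i+4}^{(8)}` and `-L_j = L_j`, so that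
`N(C_i^{(8)}, B) + N(B, C_i^{(8)}) = N(C_i^{(4)}, B)`, and `C_i^{(4)}` is the union of the `2m + 1`
lines `L_{i+4t}`. The parity condition on `I` makes `C_y^{(4)}` contain the lines indexed by `J₂`
(and `C_{y+2}^{(4)}` those indexed by `J₁`), while the classes of the other `i ∈ I` miss them;
the rest is counting residues modulo `4`.
-/

open scoped Pointwise Classical Finset

section DiffCount

variable {G : Type*} [AddGroup G]

theorem diffCount_swap (A B : Set G) (x : G) : diffCount A B x = diffCount B A (-x) := by
  unfold diffCount
  rw [← Set.ncard_image_of_injective _ Prod.swap_injective, Set.image_swap_eq_preimage_swap]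
  congr 1
  ext ⟨u, v⟩
  simp only [Set.mem_preimage, Set.mem_ofPred_eq, Prod.swap_prod_mk]
  rw [← neg_sub u v, neg_eq_iff_eq_neg]
  tauto

theorem diffCount_singleton_right (A : Set G) (b x : G) :
    diffCount A {b} x = if x + b ∈ A then 1 else 0 := by
  unfold diffCount
  split_ifs with h
  · rw [← Set.ncard_singleton (x + b, b)]
    congr 1
    ext ⟨u, v⟩
    simp only [Set.mem_ofPred_eq, Set.mem_singleton_iff, Prod.mk.injEq]
    constructor
    · rintro ⟨-, rfl, rfl⟩
      exact ⟨(sub_add_cancel u v).symm, rfl⟩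
    · rintro ⟨rfl, rfl⟩
      exact ⟨h, rfl, add_sub_cancel_right _ _⟩
  · convert Set.ncard_empty (G × G)
    ext ⟨u, v⟩
    simp only [Set.mem_ofPred_eq, Set.mem_singleton_iff, Set.mem_empty_iff_false, iff_false]
    rintro ⟨hu, rfl, rfl⟩
    exact h (by rwa [sub_add_cancel])

theorem diffCount_singleton_left (a : G) (B : Set G) (x : G) :
    diffCount {a} B x = if -x + a ∈ B then 1 else 0 := by
  rw [diffCount_swap, diffCount_singleton_right]

variable [Finite G]

theorem diffCount_union_left {A A' : Set G} (h : Disjoint A A') (B : Set G) (x : G) :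
    diffCount (A ∪ A') B x = diffCount A B x + diffCount A' B x := by
  unfold diffCount
  rw [← Set.ncard_union_eq _ (Set.toFinite _) (Set.toFinite _)]
  · congr 1
    ext p
    simp only [Set.mem_union, Set.mem_ofPred_eq]
    tauto
  · exact Set.disjoint_left.2 fun p hp hp' => Set.disjoint_left.1 h hp.1 hp'.1

theorem diffCount_union_right (A : Set G) {B B' : Set G} (h : Disjoint B B') (x : G) :
    diffCount A (B ∪ B') x = diffCount A B x + diffCount A B' x := by
  rw [diffCount_swap, diffCount_union_left h, ← diffCount_swap, ← diffCount_swap]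

theorem diffCount_union_union {A B A' B' : Set G} (h : Disjoint A B) (h' : Disjoint A' B')
    (x : G) : diffCount (A ∪ B) (A' ∪ B') x =
      diffCount A A' x + diffCount A B' x + diffCount B A' x + diffCount B B' x := by
  rw [diffCount_union_left h, diffCount_union_right _ h', diffCount_union_right _ h']
  ring

theorem diffCount_biUnion_left {ι : Type*} {s : Finset ι} {A : ι → Set G}
    (h : (s : Set ι).PairwiseDisjoint A) (B : Set G) (x : G) :
    diffCount (⋃ i ∈ s, A i) B x = ∑ i ∈ s, diffCount (A i) B x := by
  induction s using Finset.induction_on with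
  | empty => simp [diffCount]
  | insert a s ha ih =>
    rw [Finset.coe_insert] at h
    rw [Finset.set_biUnion_insert, Finset.sum_insert ha,
      diffCount_union_left _ B x, ih (h.subset (Set.subset_insert a _))]
    exact Set.disjoint_iUnion₂_right.2 fun i hi =>
      h (Set.mem_insert a _) (Set.mem_insert_of_mem a hi) (ne_of_mem_of_not_mem hi ha).symm

theorem diffCount_biUnion_right {ι : Type*} {s : Finset ι} (A : Set G) {B : ι → Set G}
    (h : (s : Set ι).PairwiseDisjoint B) (x : G) :
    diffCount A (⋃ i ∈ s, B i) x = ∑ i ∈ s, diffCount A (B i) x := by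
  simp_rw [diffCount_swap A, diffCount_biUnion_left h]

end DiffCount

section DiffCountComm

variable {G : Type*} [AddCommGroup G]

theorem diffCount_neg_neg (A B : Set G) (x : G) : diffCount (-A) (-B) x = diffCount B A x := by
  rw [diffCount_swap B]
  unfold diffCount
  rw [← Set.ncard_image_of_injective {p : G × G | p.1 ∈ A ∧ p.2 ∈ B ∧ p.1 - p.2 = -x}
    neg_injective, Set.image_neg_eq_neg]
  congr 1
  ext ⟨u, v⟩
  simp only [Set.mem_neg, Prod.neg_mk, Set.mem_ofPred_eq]
  rw [show -u - -v = -(u - v) by abel, neg_inj]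

theorem diffCount_insert_zero [Finite G] {A B : Set G} (hA : 0 ∉ A) (hB : 0 ∉ B) (x : G) :
    diffCount (insert 0 A) (insert 0 B) x = diffCount A B x + (if x ∈ A then 1 else 0)
      + (if -x ∈ B then 1 else 0) + (if x = 0 then 1 else 0) := by
  rw [Set.insert_eq, Set.insert_eq,
    diffCount_union_union (Set.disjoint_singleton_left.2 hA) (Set.disjoint_singleton_left.2 hB),
    diffCount_singleton_left, diffCount_singleton_left, diffCount_singleton_right]
  simp only [add_zero, Set.mem_singleton_iff, neg_eq_zero]
  ring

theorem diffCount_addSubgroup_self (H : AddSubgroup G) (x : G) :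
    diffCount H H x = if x ∈ H then Nat.card H else 0 := by
  unfold diffCount
  split_ifs with hx
  · rw [← SetLike.coe_sort_coe, Nat.card_coe_set_eq,
      ← Set.ncard_image_of_injective _ (fun u v h => (Prod.ext_iff.1 h).2 :
        Function.Injective fun v : G => (v + x, v))]
    congr 1
    ext ⟨u, v⟩
    simp only [Set.mem_ofPred_eq, Set.mem_image, SetLike.mem_coe, Prod.mk.injEq]
    constructor
    · rintro ⟨hu, hv, rfl⟩
      exact ⟨v, hv, by abel, rfl⟩
    · rintro ⟨w, hw, rfl, rfl⟩
      exact ⟨H.add_mem hw hx, hw, by abel⟩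
  · convert Set.ncard_empty (G × G)
    ext ⟨u, v⟩
    simp only [Set.mem_ofPred_eq, SetLike.mem_coe, Set.mem_empty_iff_false, iff_false]
    rintro ⟨hu, hv, rfl⟩
    exact hx (H.sub_mem hu hv)

theorem diffCount_addSubgroup_eq_one [Finite G] {H K : AddSubgroup G} (hdisj : Disjoint H K)
    (hcard : Nat.card H * Nat.card K = Nat.card G) (x : G) : diffCount H K x = 1 := by
  let f : H × K → G := fun p => p.1 - p.2
  have hinj : Function.Injective f := by
    rintro ⟨u, v⟩ ⟨u', v'⟩ h
    have hsub : (u : G) - u' = v - v' := sub_eq_sub_iff_sub_eq_sub.1 h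
    have h0 : (u : G) - u' = 0 := AddSubgroup.disjoint_def.1 hdisj (H.sub_mem u.2 u'.2)
      (hsub ▸ K.sub_mem v.2 v'.2)
    have h1 : (v : G) - v' = 0 := hsub ▸ h0
    rw [sub_eq_zero] at h0 h1
    exact Prod.ext (Subtype.ext h0) (Subtype.ext h1)
  obtain ⟨⟨u, v⟩, huv⟩ :=
    ((Nat.bijective_iff_injective_and_card f).2 ⟨hinj, by rw [Nat.card_prod, hcard]⟩).2 x
  unfold diffCount
  rw [← Set.ncard_singleton ((u : G), (v : G))]
  congr 1
  ext ⟨a, b⟩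
  simp only [Set.mem_ofPred_eq, SetLike.mem_coe, Set.mem_singleton_iff, Prod.mk.injEq]
  constructor
  · rintro ⟨ha, hb, hab⟩
    have := @hinj (⟨a, ha⟩, ⟨b, hb⟩) (u, v) (hab.trans huv.symm)
    simp only [Prod.mk.injEq, Subtype.ext_iff] at this
    exact this
  · rintro ⟨rfl, rfl⟩
    exact ⟨u.2, v.2, huv⟩

end DiffCountComm

section Cyclotomic

variable {F : Type*} [Field F] {ω : F} {N : ℕ}

theorem cyc_congr {i i' : ℤ} (h : i ≡ i' [ZMOD N]) : cyc ω N i = cyc ω N i' := by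
  obtain ⟨d, hd⟩ := Int.modEq_iff_dvd.1 h
  ext x
  constructor
  · rintro ⟨k, rfl⟩
    exact ⟨k - d, by rw [show i' + N * (k - d) = i + N * k by linarith]⟩
  · rintro ⟨k, rfl⟩
    exact ⟨k + d, by rw [show i + N * (k + d) = i' + N * k by linarith]⟩

theorem cyc_eq_biUnion_range {k : ℕ} (hk : k ≠ 0) (i : ℤ) :
    cyc ω N i = ⋃ s ∈ Finset.range k, cyc ω (N * k) (i + N * s) := by
  ext x
  simp only [Set.mem_iUnion, Finset.mem_range, exists_prop]
  constructor
  · rintro ⟨t, rfl⟩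
    have hk' : (0 : ℤ) < k := by exact_mod_cast Nat.pos_of_ne_zero hk
    have := Int.emod_lt_of_pos t hk'
    refine ⟨(t % k).toNat, by omega, t / k, ?_⟩
    rw [Int.toNat_of_nonneg (Int.emod_nonneg t hk'.ne')]
    congr 1
    push_cast
    linear_combination (N : ℤ) * (Int.emod_add_mul_ediv t k).symm
  · rintro ⟨s, -, t, rfl⟩
    exact ⟨s + k * t, by push_cast; ring_nf⟩

theorem zpow_mem_cyc (i : ℤ) : ω ^ i ∈ cyc ω N i := ⟨0, by simp⟩

theorem zero_notMem_cyc (hω : ω ≠ 0) (i : ℤ) : (0 : F) ∉ cyc ω N i := by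
  rintro ⟨k, hk⟩
  exact zpow_ne_zero _ hω hk.symm

theorem neg_cyc (hω : ω ≠ 0) {e : ℤ} (he : ω ^ e = -1) (i : ℤ) :
    -cyc ω N i = cyc ω N (i + e) := by
  have key : ∀ a : ℤ, ω ^ (a + e) = -ω ^ a := fun a => by rw [zpow_add₀ hω, he, mul_neg_one]
  ext x
  rw [Set.mem_neg]
  constructor
  · rintro ⟨k, hk⟩
    exact ⟨k, by rw [add_right_comm, key, ← hk, neg_neg]⟩
  · rintro ⟨k, rfl⟩
    exact ⟨k, by rw [add_right_comm, key, neg_neg]⟩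

theorem IsPrimitiveRoot.zpow_eq_zpow_iff_modEq {n : ℕ} (h : IsPrimitiveRoot ω n) (hω : ω ≠ 0)
    {a b : ℤ} : ω ^ a = ω ^ b ↔ a ≡ b [ZMOD n] := by
  rw [← div_eq_one_iff_eq (zpow_ne_zero b hω), ← zpow_sub₀ hω, h.zpow_eq_one_iff_dvd,
    Int.modEq_comm, Int.modEq_iff_dvd]

end Cyclotomic

theorem IsPrimitiveRoot.pow_eq_neg_one {R : Type*} [CommRing R] [IsDomain R] {ζ : R} {e : ℕ}
    (h : IsPrimitiveRoot ζ (2 * e)) (he : e ≠ 0) : ζ ^ e = -1 :=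
  (mul_self_eq_one_iff.1 (by rw [← pow_add, ← two_mul, h.pow_eq_one])).resolve_left
    (h.pow_ne_one_of_pos_of_lt he (by omega))

section PrimitiveElement

variable {F : Type*} [Field F] [Fintype F] {ω : F} {N : ℕ}

theorem isPrimitiveRoot_of_forall_exists_pow (hcard : 2 < Fintype.card F)
    (h : ∀ x : F, x ≠ 0 → ∃ k : ℕ, x = ω ^ k) : IsPrimitiveRoot ω (Fintype.card F - 1) := by
  have hω0 : ω ≠ 0 := by
    rintro rfl
    have hsub : (Finset.univ : Finset F) ⊆ {0, 1} := fun x _ => by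
      by_cases hx : x = 0
      · simp [hx]
      · obtain ⟨_ | k, rfl⟩ := h x hx
        · simp
        · simp at hx
    have := (Finset.card_le_card hsub).trans (Finset.card_insert_le _ _)
    simp only [Finset.card_univ, Finset.card_singleton] at this
    omega
  have hgen : ∀ u : Fˣ, u ∈ Subgroup.zpowers (Units.mk0 ω hω0) := fun u => by
    obtain ⟨k, hk⟩ := h u u.ne_zero
    exact ⟨k, Units.ext (by simp [hk])⟩
  rw [← Fintype.card_units, ← Nat.card_eq_fintype_card,
    ← orderOf_eq_card_of_forall_mem_zpowers hgen, ← orderOf_units]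
  exact IsPrimitiveRoot.orderOf ω

theorem IsPrimitiveRoot.ne_zero_of_card_sub_one (hω : IsPrimitiveRoot ω (Fintype.card F - 1)) :
    ω ≠ 0 :=
  hω.ne_zero (by have := Fintype.one_lt_card (α := F); omega)

theorem IsPrimitiveRoot.exists_zpow_eq_of_card_sub_one
    (hω : IsPrimitiveRoot ω (Fintype.card F - 1)) {x : F} (hx : x ≠ 0) : ∃ e : ℤ, ω ^ e = x := by
  have : NeZero (Fintype.card F - 1) := ⟨by have := Fintype.one_lt_card (α := F); omega⟩
  obtain ⟨e, -, he⟩ := hω.eq_pow_of_pow_eq_one (FiniteField.pow_card_sub_one_eq_one x hx)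
  exact ⟨e, by rw [zpow_natCast, he]⟩

theorem zpow_mem_cyc_iff (hω : IsPrimitiveRoot ω (Fintype.card F - 1))
    (hN : N ∣ Fintype.card F - 1) (e i : ℤ) : ω ^ e ∈ cyc ω N i ↔ e ≡ i [ZMOD N] := by
  constructor
  · rintro ⟨k, hk⟩
    have := ((hω.zpow_eq_zpow_iff_modEq hω.ne_zero_of_card_sub_one).1 hk).of_dvd
      (Int.natCast_dvd_natCast.2 hN)
    exact this.trans (Int.modEq_iff_dvd.2 ⟨-k, by ring⟩)
  · intro h
    obtain ⟨k, hk⟩ := Int.modEq_iff_dvd.1 h.symm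
    exact ⟨k, by rw [← hk]; ring_nf⟩

theorem cyc_disjoint (hω : IsPrimitiveRoot ω (Fintype.card F - 1))
    (hN : N ∣ Fintype.card F - 1) {i i' : ℤ} (h : ¬ i ≡ i' [ZMOD N]) :
    Disjoint (cyc ω N i) (cyc ω N i') := by
  rw [Set.disjoint_left]
  rintro x ⟨k, rfl⟩ hx
  rw [zpow_mem_cyc_iff hω hN] at hx
  exact h ((Int.modEq_iff_dvd.2 ⟨k, by ring⟩).trans hx)

theorem mem_cyc_iff_pow_eq_one (hω : IsPrimitiveRoot ω (Fintype.card F - 1))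
    (hN : N ∣ Fintype.card F - 1) (hN0 : N ≠ 0) (i : ℤ) (x : F) :
    x ∈ cyc ω N i ↔ (ω ^ (-i) * x) ^ ((Fintype.card F - 1) / N) = 1 := by
  have hω0 := hω.ne_zero_of_card_sub_one
  have hprim := hω.pow_of_dvd hN0 hN
  obtain ⟨r, hr⟩ := hN
  rw [hr, Nat.mul_div_cancel_left r (Nat.pos_of_ne_zero hN0)] at hprim ⊢
  constructor
  · rintro ⟨k, rfl⟩
    rw [← zpow_add₀ hω0, neg_add_cancel_left, ← zpow_natCast, ← zpow_mul,
      hω.zpow_eq_one_iff_dvd, hr]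
    exact ⟨k, by push_cast; ring⟩
  · intro h
    have : NeZero r := ⟨by rintro rfl; have := Fintype.one_lt_card (α := F); omega⟩
    obtain ⟨j, -, hj⟩ := hprim.eq_pow_of_pow_eq_one h
    refine ⟨j, ?_⟩
    rw [zpow_add₀ hω0, zpow_mul, zpow_natCast, zpow_natCast, hj, ← mul_assoc, ← zpow_add₀ hω0,
      add_neg_cancel, zpow_zero, one_mul]

theorem ncard_cyc (hω : IsPrimitiveRoot ω (Fintype.card F - 1)) (hN : N ∣ Fintype.card F - 1)
    (hN0 : N ≠ 0) (i : ℤ) : (cyc ω N i).ncard = (Fintype.card F - 1) / N := by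
  have hω0 := hω.ne_zero_of_card_sub_one
  have hpos : 0 < (Fintype.card F - 1) / N := Nat.div_pos (Nat.le_of_dvd
    (by have := Fintype.one_lt_card (α := F); omega) hN) (Nat.pos_of_ne_zero hN0)
  have hpre : cyc ω N i = (ω ^ (-i) * ·) ⁻¹'
      (Polynomial.nthRootsFinset ((Fintype.card F - 1) / N) (1 : F) : Set F) := by
    ext x
    rw [mem_cyc_iff_pow_eq_one hω hN hN0, Set.mem_preimage, Finset.mem_coe,
      Polynomial.mem_nthRootsFinset hpos]
  rw [hpre, Set.ncard_preimage_of_injective_subset_range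
    (mul_right_injective₀ (zpow_ne_zero _ hω0)) (fun y _ => ⟨ω ^ i * y, by
      dsimp only
      rw [← mul_assoc, ← zpow_add₀ hω0, neg_add_cancel, zpow_zero, one_mul]⟩),
    Set.ncard_coe_finset, (hω.pow_of_dvd hN0 hN).card_nthRootsFinset]

end PrimitiveElement

section ResidueProgressions

variable {q r : ℕ}

def fourProg (q : ℕ) (c : ℤ) (k : ℕ) : Finset (ZMod (q + 1)) :=
  (Finset.range k).image fun s : ℕ => ((c + 4 * s : ℤ) : ZMod (q + 1))

theorem fourProg_mono (c : ℤ) {k l : ℕ} (hkl : k ≤ l) : fourProg q c k ⊆ fourProg q c l :=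
  Finset.image_subset_image (Finset.range_subset_range.2 hkl)

theorem card_fourProg (hr : q + 1 = 4 * r) (c : ℤ) {k : ℕ} (hk : k ≤ r) :
    #(fourProg q c k) = k := by
  rw [fourProg, Finset.card_image_of_injOn, Finset.card_range]
  intro s hs t ht hst
  simp only [Finset.coe_range, Set.mem_Iio] at hs ht
  rw [ZMod.intCast_eq_intCast_iff_dvd_sub, hr] at hst
  obtain ⟨d, hd⟩ := hst
  have : ((t : ℤ) - s) = 0 := Int.eq_zero_of_abs_lt_dvd (m := r)
    ⟨d, by push_cast at hd; linarith⟩ (by rw [abs_lt]; omega)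
  omega

theorem disjoint_fourProg (hr : q + 1 = 4 * r) {c c' : ℤ} (h : ¬ c ≡ c' [ZMOD 4]) (k l : ℕ) :
    Disjoint (fourProg q c k) (fourProg q c' l) := by
  rw [Finset.disjoint_left]
  simp only [fourProg, Finset.mem_image, Finset.mem_range]
  rintro _ ⟨s, -, rfl⟩ ⟨t, -, hst⟩
  rw [ZMod.intCast_eq_intCast_iff_dvd_sub, hr] at hst
  obtain ⟨d, hd⟩ := hst
  exact h (Int.modEq_iff_dvd.2 ⟨s - t - r * d, by push_cast at hd; linarith⟩)

theorem mem_fourProg_iff (hr : q + 1 = 4 * r) (c : ℤ) (j : ZMod (q + 1)) :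
    j ∈ fourProg q c r ↔ (j.val : ℤ) ≡ c [ZMOD 4] := by
  have hr0 : (0 : ℤ) < r := by omega
  have hr' : ((q + 1 : ℕ) : ℤ) = 4 * r := by exact_mod_cast hr
  simp only [fourProg, Finset.mem_image, Finset.mem_range]
  constructor
  · rintro ⟨s, -, rfl⟩
    rw [ZMod.val_intCast, hr', Int.ModEq, Int.emod_emod_of_dvd _ (dvd_mul_right 4 _)]
    omega
  · intro h
    obtain ⟨u, hu⟩ := Int.modEq_iff_dvd.1 h.symm
    refine ⟨(u % r).toNat, by have := Int.emod_lt_of_pos u hr0; omega, ?_⟩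
    rw [show j = ((j.val : ℤ) : ZMod (q + 1)) by simp, ZMod.intCast_eq_intCast_iff_dvd_sub, hr',
      Int.toNat_of_nonneg (Int.emod_nonneg u hr0.ne')]
    exact ⟨u / r, by linear_combination hu - 4 * Int.emod_add_mul_ediv u r⟩

theorem sum_ite_mem_fourProg (hr : q + 1 = 4 * r) (j : ZMod (q + 1)) (I : Finset ℕ) :
    ∑ i ∈ I, ((if j ∈ fourProg q i r then 1 else 0) + (if j ∈ fourProg q (i + 2) r then 1 else 0))
      + ∑ i ∈ I, ((if j ∈ fourProg q (i + 1) r then 1 else 0)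
        + (if j ∈ fourProg q (i + 3) r then 1 else 0)) = (#I : ℤ) := by
  rw [← Finset.sum_add_distrib, Finset.card_eq_sum_ones, Nat.cast_sum, Nat.cast_one]
  refine Finset.sum_congr rfl fun i _ => ?_
  simp only [mem_fourProg_iff hr, Int.ModEq]
  split_ifs <;> omega

end ResidueProgressions

section Lines

variable {F : Type*} [Field F] {q : ℕ} {ω : F}

/-- The paper's `L_j`, indexed by `j` modulo `q + 1`; with `0` adjoined it is the `𝔽_q`-line
`ω^j 𝔽_q`. -/
def lineClass (ω : F) (q : ℕ) (j : ZMod (q + 1)) : Set F := cyc ω (q + 1) j.val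

def lineUnion (ω : F) (q : ℕ) (S : Finset (ZMod (q + 1))) : Set F := ⋃ j ∈ S, lineClass ω q j

theorem lineClass_intCast (c : ℤ) : lineClass ω q c = cyc ω (q + 1) c :=
  cyc_congr (by rw [ZMod.val_intCast]; exact Int.mod_modEq c _)

theorem lineUnion_fourProg (c : ℤ) (k : ℕ) :
    lineUnion ω q (fourProg q c k) = ⋃ s ∈ Finset.range k, cyc ω (q + 1) (c + 4 * s) := by
  simp only [lineUnion, fourProg, Finset.set_biUnion_finset_image, lineClass_intCast]

theorem iUnion_cyc_image_mod_eq_lineUnion (c k : ℕ) (d : ℤ) :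
    ⋃ j ∈ (Finset.range k).image (fun i => (c + 4 * i) % (q + 1)), cyc ω (q + 1) (j + d) =
      lineUnion ω q (fourProg q (c + d) k) := by
  rw [Finset.set_biUnion_finset_image, lineUnion_fourProg]
  refine Set.iUnion₂_congr fun i _ => cyc_congr ?_
  push_cast
  rw [add_right_comm]
  exact (Int.mod_modEq _ _).add_right d

theorem cyc_four_eq_lineUnion {r : ℕ} (hr : q + 1 = 4 * r) (c : ℤ) :
    cyc ω 4 c = lineUnion ω q (fourProg q c r) := by
  rw [cyc_eq_biUnion_range (k := r) (by omega), ← hr, lineUnion_fourProg]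
  simp only [Nat.cast_ofNat]

theorem cyc_eight_union (c : ℤ) : cyc ω 8 c ∪ cyc ω 8 (c + 4) = cyc ω 4 c := by
  rw [cyc_eq_biUnion_range (N := 4) (k := 2) two_ne_zero c]
  simp [Finset.range_add_one, Set.union_comm]

end Lines

section CardArithmetic

variable {F : Type*} [Fintype F] {q : ℕ}

theorem card_sub_one_eq_mul (hF : Fintype.card F = q ^ 2) :
    Fintype.card F - 1 = (q + 1) * (q - 1) := by
  rw [hF, ← Nat.sq_sub_sq, one_pow]

theorem succ_dvd_card_sub_one (hF : Fintype.card F = q ^ 2) : q + 1 ∣ Fintype.card F - 1 :=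
  ⟨_, card_sub_one_eq_mul hF⟩

theorem card_sub_one_div_succ (hF : Fintype.card F = q ^ 2) :
    (Fintype.card F - 1) / (q + 1) = q - 1 := by
  rw [card_sub_one_eq_mul hF, Nat.mul_div_cancel_left _ q.succ_pos]

theorem card_sub_one_eq_eight_mul {m : ℕ} (hF : Fintype.card F = q ^ 2) (hm : q = 8 * m + 3) :
    Fintype.card F - 1 = 8 * (8 * m ^ 2 + 6 * m + 1) := by
  rw [hF, hm]
  ring_nf
  omega

end CardArithmetic

section LineGeometry

variable {F : Type*} [Field F] [Fintype F] {q : ℕ} {ω : F}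

theorem one_lt_of_card_eq_sq (hF : Fintype.card F = q ^ 2) : 1 < q := by
  have := Fintype.one_lt_card (α := F)
  rw [hF] at this
  exact (Nat.one_lt_pow_iff two_ne_zero).1 this

theorem exists_mem_lineClass (hω : IsPrimitiveRoot ω (Fintype.card F - 1)) {x : F}
    (hx : x ≠ 0) : ∃ j, x ∈ lineClass ω q j := by
  obtain ⟨e, rfl⟩ := hω.exists_zpow_eq_of_card_sub_one hx
  exact ⟨e, by rw [lineClass_intCast]; exact zpow_mem_cyc e⟩

theorem zero_notMem_lineClass (hω : IsPrimitiveRoot ω (Fintype.card F - 1))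
    (j : ZMod (q + 1)) : (0 : F) ∉ lineClass ω q j :=
  zero_notMem_cyc hω.ne_zero_of_card_sub_one _

theorem lineClass_disjoint (hω : IsPrimitiveRoot ω (Fintype.card F - 1))
    (hF : Fintype.card F = q ^ 2) {j j' : ZMod (q + 1)} (h : j ≠ j') :
    Disjoint (lineClass ω q j) (lineClass ω q j') :=
  cyc_disjoint hω (succ_dvd_card_sub_one hF) fun h' => h <| by
    simpa using (ZMod.intCast_eq_intCast_iff _ _ _).2 h'

theorem pairwiseDisjoint_lineClass (hω : IsPrimitiveRoot ω (Fintype.card F - 1))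
    (hF : Fintype.card F = q ^ 2) (U : Set (ZMod (q + 1))) : U.PairwiseDisjoint (lineClass ω q) :=
  fun _ _ _ _ hab => lineClass_disjoint hω hF hab

theorem disjoint_lineUnion (hω : IsPrimitiveRoot ω (Fintype.card F - 1))
    (hF : Fintype.card F = q ^ 2) {S T : Finset (ZMod (q + 1))} (h : Disjoint S T) :
    Disjoint (lineUnion ω q S) (lineUnion ω q T) :=
  Set.disjoint_iUnion₂_left.2 fun _ ha => Set.disjoint_iUnion₂_right.2 fun _ hb =>
    lineClass_disjoint hω hF (Finset.disjoint_left.1 h ha <| · ▸ hb)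

theorem ncard_insert_zero_lineClass (hω : IsPrimitiveRoot ω (Fintype.card F - 1))
    (hF : Fintype.card F = q ^ 2) (j : ZMod (q + 1)) :
    (insert 0 (lineClass ω q j)).ncard = q := by
  rw [Set.ncard_insert_of_notMem (zero_notMem_lineClass hω j), lineClass,
    ncard_cyc hω (succ_dvd_card_sub_one hF) q.succ_ne_zero, card_sub_one_div_succ hF]
  have := one_lt_of_card_eq_sq hF
  omega

theorem mem_insert_zero_lineClass_iff (hω : IsPrimitiveRoot ω (Fintype.card F - 1))
    (hF : Fintype.card F = q ^ 2) (j : ZMod (q + 1)) (x : F) :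
    x ∈ insert 0 (lineClass ω q j) ↔ (ω ^ (-(j.val : ℤ)) * x) ^ q = ω ^ (-(j.val : ℤ)) * x := by
  have hq := one_lt_of_card_eq_sq hF
  rw [Set.mem_insert_iff, lineClass, mem_cyc_iff_pow_eq_one hω (succ_dvd_card_sub_one hF)
    q.succ_ne_zero, card_sub_one_div_succ hF]
  obtain ⟨r, rfl⟩ : ∃ r, q = r + 1 := ⟨q - 1, by omega⟩
  rw [Nat.add_sub_cancel, pow_succ']
  by_cases hx : x = 0
  · simp [hx]
  · rw [mul_eq_left₀ (mul_ne_zero (zpow_ne_zero _ hω.ne_zero_of_card_sub_one) hx)]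
    simp [hx]

/-- The line is the kernel of the additive map `x ↦ (ω^{-j} x)^q - ω^{-j} x`; it is additive
because `q` is a power of the characteristic. -/
theorem exists_addSubgroup_coe_eq_lineClass (hq : IsPrimePow q) (hF : Fintype.card F = q ^ 2)
    (hω : IsPrimitiveRoot ω (Fintype.card F - 1)) (j : ZMod (q + 1)) :
    ∃ H : AddSubgroup F, (H : Set F) = insert 0 (lineClass ω q j) := by
  obtain ⟨p, k, hp, -, rfl⟩ := hq
  have : Fact p.Prime := ⟨Nat.prime_iff.2 hp⟩
  have : CharP F p := charP_of_card_eq_prime_pow (hF.trans (pow_mul p k 2).symm)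
  let φ : F →+ F := (iterateFrobenius F p k).toAddMonoidHom - AddMonoidHom.id F
  refine ⟨(φ.comp (AddMonoidHom.mulLeft (ω ^ (-(j.val : ℤ))))).ker, ?_⟩
  ext x
  rw [SetLike.mem_coe, AddMonoidHom.mem_ker, mem_insert_zero_lineClass_iff hω hF]
  simp [φ, iterateFrobenius_def, sub_eq_zero]

theorem neg_lineClass (hq : IsPrimePow q) (hF : Fintype.card F = q ^ 2)
    (hω : IsPrimitiveRoot ω (Fintype.card F - 1)) (j : ZMod (q + 1)) :
    -lineClass ω q j = lineClass ω q j := by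
  obtain ⟨H, hH⟩ := exists_addSubgroup_coe_eq_lineClass hq hF hω j
  have key : ∀ x, x ∈ lineClass ω q j ↔ x ∈ H ∧ x ≠ 0 := fun x => by
    rw [← SetLike.mem_coe, hH, Set.mem_insert_iff]
    have := zero_notMem_lineClass hω j
    constructor
    · exact fun h => ⟨Or.inr h, fun h0 => this (h0 ▸ h)⟩
    · rintro ⟨h | h, h0⟩
      exacts [absurd h h0, h]
  ext x
  rw [Set.mem_neg, key, key, neg_mem_iff, neg_ne_zero]

theorem diffCount_insert_zero_lineClass (hq : IsPrimePow q) (hF : Fintype.card F = q ^ 2)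
    (hω : IsPrimitiveRoot ω (Fintype.card F - 1)) (a b : ZMod (q + 1)) (x : F) :
    diffCount (insert 0 (lineClass ω q a)) (insert 0 (lineClass ω q b)) x =
      if a = b then (if x ∈ insert 0 (lineClass ω q a) then q else 0) else 1 := by
  obtain ⟨Ha, hHa⟩ := exists_addSubgroup_coe_eq_lineClass hq hF hω a
  obtain ⟨Hb, hHb⟩ := exists_addSubgroup_coe_eq_lineClass hq hF hω b
  have hcard : ∀ {H : AddSubgroup F} {j}, (H : Set F) = insert 0 (lineClass ω q j) →
      Nat.card H = q := fun hH => by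
    rw [← SetLike.coe_sort_coe, Nat.card_coe_set_eq, hH, ncard_insert_zero_lineClass hω hF]
  split_ifs with hab hx
  · subst hab
    rw [← hHa, diffCount_addSubgroup_self, if_pos (by rwa [← SetLike.mem_coe, hHa]), hcard hHa]
  · subst hab
    rw [← hHa, diffCount_addSubgroup_self, if_neg (by rwa [← SetLike.mem_coe, hHa])]
  · rw [← hHa, ← hHb]
    refine diffCount_addSubgroup_eq_one (AddSubgroup.disjoint_def.2 fun {y} hya hyb => ?_) ?_ x
    · rw [← SetLike.mem_coe, hHa] at hya
      rw [← SetLike.mem_coe, hHb] at hyb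
      rcases hya with h | hya
      · exact h
      rcases hyb with h | hyb
      · exact h
      exact absurd hyb (Set.disjoint_left.1 (lineClass_disjoint hω hF hab) hya)
    · rw [hcard hHa, hcard hHb, Nat.card_eq_fintype_card, hF, sq]

theorem diffCount_lineClass_of_mem (hq : IsPrimePow q) (hF : Fintype.card F = q ^ 2)
    (hω : IsPrimitiveRoot ω (Fintype.card F - 1)) {x : F} {j₀ : ZMod (q + 1)}
    (hx : x ∈ lineClass ω q j₀) (a b : ZMod (q + 1)) :
    (diffCount (lineClass ω q a) (lineClass ω q b) x : ℤ) =
      (if a = b then q * (if j₀ = a then 1 else 0) else 1) - (if j₀ = a then 1 else 0)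
        - (if j₀ = b then 1 else 0) := by
  have hx0 : x ≠ 0 := fun h => zero_notMem_lineClass hω j₀ (h ▸ hx)
  have hmem : ∀ j, x ∈ lineClass ω q j ↔ j₀ = j := fun j =>
    ⟨fun h => by_contra fun hne => Set.disjoint_left.1 (lineClass_disjoint hω hF hne) hx h,
      fun h => h ▸ hx⟩
  have h := diffCount_insert_zero (zero_notMem_lineClass hω a) (zero_notMem_lineClass hω b) x
  rw [diffCount_insert_zero_lineClass hq hF hω, ← Set.mem_neg, neg_lineClass hq hF hω] at h
  simp only [Set.mem_insert_iff, hx0, false_or, hmem, if_false, add_zero] at h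
  split_ifs at h ⊢ <;> push_cast <;> omega

theorem diffCount_lineClass_zero (hq : IsPrimePow q) (hF : Fintype.card F = q ^ 2)
    (hω : IsPrimitiveRoot ω (Fintype.card F - 1)) (a b : ZMod (q + 1)) :
    diffCount (lineClass ω q a) (lineClass ω q b) 0 = if a = b then q - 1 else 0 := by
  have h := diffCount_insert_zero (zero_notMem_lineClass hω a) (zero_notMem_lineClass hω b) 0
  rw [diffCount_insert_zero_lineClass hq hF hω] at h
  simp only [Set.mem_insert_iff, true_or, if_true, neg_zero, zero_notMem_lineClass hω,
    if_false, add_zero] at h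
  split_ifs at h ⊢ <;> omega

theorem diffCount_lineUnion_of_mem (hq : IsPrimePow q) (hF : Fintype.card F = q ^ 2)
    (hω : IsPrimitiveRoot ω (Fintype.card F - 1)) {x : F} {j₀ : ZMod (q + 1)}
    (hx : x ∈ lineClass ω q j₀) (S T : Finset (ZMod (q + 1))) :
    (diffCount (lineUnion ω q S) (lineUnion ω q T) x : ℤ) =
      #S * #T - #(S ∩ T) + q * (if j₀ ∈ S ∩ T then 1 else 0)
        - #T * (if j₀ ∈ S then 1 else 0) - #S * (if j₀ ∈ T then 1 else 0) := by
  have hterm : ∀ a b : ZMod (q + 1),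
      (diffCount (lineClass ω q a) (lineClass ω q b) x : ℤ) = 1 - (if j₀ = a then 1 else 0)
        - (if j₀ = b then 1 else 0)
        + (if a = b then (q : ℤ) * (if j₀ = b then 1 else 0) - 1 else 0) := fun a b => by
    rw [diffCount_lineClass_of_mem hq hF hω hx]
    split_ifs <;> subst_vars <;> (try contradiction) <;> push_cast <;> ring
  rw [lineUnion, lineUnion, diffCount_biUnion_left (pairwiseDisjoint_lineClass hω hF _)]
  simp_rw [diffCount_biUnion_right _ (pairwiseDisjoint_lineClass hω hF _)]
  push_cast
  simp_rw [hterm]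
  simp [Finset.sum_add_distrib, Finset.sum_sub_distrib, Finset.sum_ite_eq, Finset.sum_ite_mem]
  ring

theorem diffCount_lineUnion_zero (hq : IsPrimePow q) (hF : Fintype.card F = q ^ 2)
    (hω : IsPrimitiveRoot ω (Fintype.card F - 1)) (S T : Finset (ZMod (q + 1))) :
    diffCount (lineUnion ω q S) (lineUnion ω q T) 0 = (q - 1) * #(S ∩ T) := by
  rw [lineUnion, lineUnion, diffCount_biUnion_left (pairwiseDisjoint_lineClass hω hF _)]
  simp_rw [diffCount_biUnion_right _ (pairwiseDisjoint_lineClass hω hF _),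
    diffCount_lineClass_zero hq hF hω]
  simp [Finset.sum_ite_eq, Finset.sum_ite_mem, mul_comm]

end LineGeometry

section EighthClasses

variable {F : Type*} [Field F] [Fintype F] {q m : ℕ} {ω : F} {I : Finset ℕ}

/-- `-1 = ω^((q²-1)/2)` and `(q²-1)/2 ≡ 4 (mod 8)`. -/
theorem neg_cyc_eight (hω : IsPrimitiveRoot ω (Fintype.card F - 1)) (hF : Fintype.card F = q ^ 2)
    (hm : q = 8 * m + 3) (c : ℤ) : -cyc ω 8 c = cyc ω 8 (c + 4) := by
  have hω' : IsPrimitiveRoot ω (2 * (4 * (8 * m ^ 2 + 6 * m + 1))) := by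
    rwa [← mul_assoc, show 2 * 4 = 8 from rfl, ← card_sub_one_eq_eight_mul hF hm]
  rw [neg_cyc hω.ne_zero_of_card_sub_one (e := ((4 * (8 * m ^ 2 + 6 * m + 1) : ℕ) : ℤ))
    (by rw [zpow_natCast, hω'.pow_eq_neg_one (by positivity)])]
  exact cyc_congr (Int.modEq_iff_dvd.2 ⟨-(4 * m ^ 2 + 3 * m), by push_cast; ring⟩)

theorem disjoint_cyc_eight_lineUnion (hω : IsPrimitiveRoot ω (Fintype.card F - 1))
    (hF : Fintype.card F = q ^ 2) (hm : q = 8 * m + 3) {c d : ℤ} (h : ¬ c ≡ d [ZMOD 4])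
    (k : ℕ) : Disjoint (cyc ω 8 c) (lineUnion ω q (fourProg q d k)) := by
  have hsub : cyc ω 8 c ⊆ lineUnion ω q (fourProg q c (2 * m + 1)) := by
    rw [← cyc_four_eq_lineUnion (by omega), ← cyc_eight_union]
    exact Set.subset_union_left
  exact (disjoint_lineUnion hω hF
    (disjoint_fourProg (r := 2 * m + 1) (by omega) h _ _)).mono_left hsub

theorem pairwiseDisjoint_cyc_eight (hω : IsPrimitiveRoot ω (Fintype.card F - 1))
    (hF : Fintype.card F = q ^ 2) (hm : q = 8 * m + 3) (hI : I ⊆ Finset.range 8) (c : ℤ) :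
    (I : Set ℕ).PairwiseDisjoint fun i => cyc ω 8 (i + c) := fun i hi j hj hij => by
  have := Finset.mem_range.1 (hI hi)
  have := Finset.mem_range.1 (hI hj)
  refine cyc_disjoint hω ⟨_, card_sub_one_eq_eight_mul hF hm⟩ fun h => hij ?_
  simp only [Int.ModEq] at h
  omega

theorem diffCount_cyc_eight_add_swap (hq : IsPrimePow q) (hF : Fintype.card F = q ^ 2)
    (hω : IsPrimitiveRoot ω (Fintype.card F - 1)) (hm : q = 8 * m + 3) (c : ℤ)
    (T : Finset (ZMod (q + 1))) (x : F) :
    diffCount (cyc ω 8 c) (lineUnion ω q T) x + diffCount (lineUnion ω q T) (cyc ω 8 c) x =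
      diffCount (lineUnion ω q (fourProg q c (2 * m + 1))) (lineUnion ω q T) x := by
  have hnegT : -lineUnion ω q T = lineUnion ω q T := by
    simp only [lineUnion, Set.iUnion_neg, neg_lineClass hq hF hω]
  have hdisj : Disjoint (cyc ω 8 c) (cyc ω 8 (c + 4)) :=
    cyc_disjoint hω ⟨_, card_sub_one_eq_eight_mul hF hm⟩ fun h => by
      simp only [Int.ModEq] at h
      omega
  rw [← diffCount_neg_neg (cyc ω 8 c), hnegT, neg_cyc_eight hω hF hm,
    ← diffCount_union_left hdisj, cyc_eight_union,
    cyc_four_eq_lineUnion (q := q) (r := 2 * m + 1) (by omega)]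

theorem diffCount_iUnion_cyc_eight_add_swap (hq : IsPrimePow q) (hF : Fintype.card F = q ^ 2)
    (hω : IsPrimitiveRoot ω (Fintype.card F - 1)) (hm : q = 8 * m + 3) (hI : I ⊆ Finset.range 8)
    (c : ℤ) (T : Finset (ZMod (q + 1))) (x : F) :
    diffCount (⋃ i ∈ I, cyc ω 8 (i + c)) (lineUnion ω q T) x
        + diffCount (lineUnion ω q T) (⋃ i ∈ I, cyc ω 8 (i + c)) x =
      ∑ i ∈ I, diffCount (lineUnion ω q (fourProg q (i + c) (2 * m + 1))) (lineUnion ω q T) x := by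
  rw [diffCount_biUnion_left (pairwiseDisjoint_cyc_eight hω hF hm hI c),
    diffCount_biUnion_right _ (pairwiseDisjoint_cyc_eight hω hF hm hI c), ← Finset.sum_add_distrib]
  exact Finset.sum_congr rfl fun i _ => diffCount_cyc_eight_add_swap hq hF hω hm _ T x

end EighthClasses

section Pairs

variable {F : Type*} [Field F] [Fintype F] {q m : ℕ} {ω : F} {I : Finset ℕ} {y : ℕ}

theorem sum_diffCount_fourProg_of_mem (hq : IsPrimePow q) (hF : Fintype.card F = q ^ 2)
    (hω : IsPrimitiveRoot ω (Fintype.card F - 1)) (hm : q = 8 * m + 3) (hy : y ∈ I)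
    (hIcard : #I = 3) (hpar : ∀ i ∈ I, i ≠ y → i % 2 ≠ y % 2) (δ : ℤ) {x : F}
    {j₀ : ZMod (q + 1)} (hx : x ∈ lineClass ω q j₀) :
    ∑ i ∈ I, (diffCount (lineUnion ω q (fourProg q (i + δ) (2 * m + 1)))
        (lineUnion ω q (fourProg q (y + δ) m)) x : ℤ) =
      6 * m ^ 2 + 2 * m + 2 * m * (if j₀ ∈ fourProg q (y + δ) m then 1 else 0)
        - m * ∑ i ∈ I, (if j₀ ∈ fourProg q (i + δ) (2 * m + 1) then 1 else 0) := by
  have hr : q + 1 = 4 * (2 * m + 1) := by omega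
  have key : ∀ i ∈ I, (diffCount (lineUnion ω q (fourProg q (i + δ) (2 * m + 1)))
      (lineUnion ω q (fourProg q (y + δ) m)) x : ℤ) =
        (2 * m + 1) * m - m * (if j₀ ∈ fourProg q (i + δ) (2 * m + 1) then 1 else 0)
          - (2 * m + 1) * (if j₀ ∈ fourProg q (y + δ) m then 1 else 0)
          + if i = y then (q : ℤ) * (if j₀ ∈ fourProg q (y + δ) m then 1 else 0) - m else 0 := by
    intro i hi
    rw [diffCount_lineUnion_of_mem hq hF hω hx, card_fourProg hr _ le_rfl,
      card_fourProg hr _ (by omega)]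
    by_cases hiy : i = y
    · subst hiy
      rw [if_pos rfl, Finset.inter_eq_right.2 (fourProg_mono _ (by omega)),
        card_fourProg hr _ (by omega)]
      push_cast
      ring
    · have hne : ¬ (i : ℤ) + δ ≡ y + δ [ZMOD 4] := by
        have := hpar i hi hiy
        simp only [Int.ModEq]
        omega
      rw [if_neg hiy, Finset.disjoint_iff_inter_eq_empty.1 (disjoint_fourProg hr hne _ _)]
      simp
  rw [Finset.sum_congr rfl key]
  simp only [Finset.sum_add_distrib, Finset.sum_sub_distrib, Finset.sum_const, Finset.sum_ite_eq',
    if_pos hy, hIcard, ← Finset.mul_sum, nsmul_eq_mul]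
  push_cast [hm]
  ring

theorem sum_diffCount_fourProg_zero (hq : IsPrimePow q) (hF : Fintype.card F = q ^ 2)
    (hω : IsPrimitiveRoot ω (Fintype.card F - 1)) (hm : q = 8 * m + 3) (hy : y ∈ I)
    (hpar : ∀ i ∈ I, i ≠ y → i % 2 ≠ y % 2) (δ : ℤ) :
    ∑ i ∈ I, diffCount (lineUnion ω q (fourProg q (i + δ) (2 * m + 1)))
        (lineUnion ω q (fourProg q (y + δ) m)) 0 = (q - 1) * m := by
  have hr : q + 1 = 4 * (2 * m + 1) := by omega
  have key : ∀ i ∈ I, diffCount (lineUnion ω q (fourProg q (i + δ) (2 * m + 1)))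
      (lineUnion ω q (fourProg q (y + δ) m)) 0 = if i = y then (q - 1) * m else 0 := by
    intro i hi
    rw [diffCount_lineUnion_zero hq hF hω]
    by_cases hiy : i = y
    · subst hiy
      rw [if_pos rfl, Finset.inter_eq_right.2 (fourProg_mono _ (by omega)),
        card_fourProg hr _ (by omega)]
    · have hne : ¬ (i : ℤ) + δ ≡ y + δ [ZMOD 4] := by
        have := hpar i hi hiy
        simp only [Int.ModEq]
        omega
      rw [if_neg hiy, Finset.disjoint_iff_inter_eq_empty.1 (disjoint_fourProg hr hne _ _)]
      simp
  rw [Finset.sum_congr rfl key, Finset.sum_ite_eq', if_pos hy]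

theorem diffCount_union_add_swap (hq : IsPrimePow q) (hF : Fintype.card F = q ^ 2)
    (hω : IsPrimitiveRoot ω (Fintype.card F - 1)) (hm : q = 8 * m + 3) (hI : I ⊆ Finset.range 8)
    (hpar : ∀ i ∈ I, i ≠ y → i % 2 ≠ y % 2) (δ : ℤ) (x : F) :
    diffCount ((⋃ i ∈ I, cyc ω 8 (i + δ)) ∪ lineUnion ω q (fourProg q (y + (δ + 2)) m))
        ((⋃ i ∈ I, cyc ω 8 (i + (δ + 2))) ∪ lineUnion ω q (fourProg q (y + δ) m)) x
      + diffCount ((⋃ i ∈ I, cyc ω 8 (i + (δ + 2))) ∪ lineUnion ω q (fourProg q (y + δ) m))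
        ((⋃ i ∈ I, cyc ω 8 (i + δ)) ∪ lineUnion ω q (fourProg q (y + (δ + 2)) m)) x =
      ∑ i ∈ I, ∑ j ∈ I, (diffCount (cyc ω 8 (i + δ)) (cyc ω 8 (j + (δ + 2))) x
          + diffCount (cyc ω 8 (i + (δ + 2))) (cyc ω 8 (j + δ)) x)
        + ∑ i ∈ I, diffCount (lineUnion ω q (fourProg q (i + δ) (2 * m + 1)))
            (lineUnion ω q (fourProg q (y + δ) m)) x
        + ∑ i ∈ I, diffCount (lineUnion ω q (fourProg q (i + (δ + 2)) (2 * m + 1)))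
            (lineUnion ω q (fourProg q (y + (δ + 2)) m)) x
        + diffCount (lineUnion ω q (fourProg q (y + (δ + 2)) m))
            (lineUnion ω q (fourProg q (y + δ) m)) x
        + diffCount (lineUnion ω q (fourProg q (y + δ) m))
            (lineUnion ω q (fourProg q (y + (δ + 2)) m)) x := by
  have hdisj : ∀ c d : ℤ, (d = c + 2 ∨ c = d + 2) →
      Disjoint (⋃ i ∈ I, cyc ω 8 (i + c)) (lineUnion ω q (fourProg q (y + d) m)) :=
    fun c d hcd => Set.disjoint_iUnion₂_left.2 fun i hi =>
      disjoint_cyc_eight_lineUnion hω hF hm (by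
        have := hpar i hi
        simp only [Int.ModEq]
        omega) m
  have hCC : ∀ c d : ℤ, diffCount (⋃ i ∈ I, cyc ω 8 (i + c)) (⋃ i ∈ I, cyc ω 8 (i + d)) x =
      ∑ i ∈ I, ∑ j ∈ I, diffCount (cyc ω 8 (i + c)) (cyc ω 8 (j + d)) x := fun c d => by
    rw [diffCount_biUnion_left (pairwiseDisjoint_cyc_eight hω hF hm hI c)]
    simp_rw [diffCount_biUnion_right _ (pairwiseDisjoint_cyc_eight hω hF hm hI d)]
  have h₁ := diffCount_iUnion_cyc_eight_add_swap hq hF hω hm hI δ (fourProg q (y + δ) m) x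
  have h₂ := diffCount_iUnion_cyc_eight_add_swap hq hF hω hm hI (δ + 2)
    (fourProg q (y + (δ + 2)) m) x
  rw [diffCount_union_union (hdisj _ _ (.inl rfl)) (hdisj _ _ (.inr rfl)),
    diffCount_union_union (hdisj _ _ (.inr rfl)) (hdisj _ _ (.inl rfl)), hCC, hCC]
  simp only [Finset.sum_add_distrib]
  omega

theorem diffCount_union_add_swap_zero (hq : IsPrimePow q) (hF : Fintype.card F = q ^ 2)
    (hω : IsPrimitiveRoot ω (Fintype.card F - 1)) (hm : q = 8 * m + 3) (hI : I ⊆ Finset.range 8)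
    (hy : y ∈ I) (hpar : ∀ i ∈ I, i ≠ y → i % 2 ≠ y % 2) (δ : ℤ) :
    diffCount ((⋃ i ∈ I, cyc ω 8 (i + δ)) ∪ lineUnion ω q (fourProg q (y + (δ + 2)) m))
        ((⋃ i ∈ I, cyc ω 8 (i + (δ + 2))) ∪ lineUnion ω q (fourProg q (y + δ) m)) 0
      + diffCount ((⋃ i ∈ I, cyc ω 8 (i + (δ + 2))) ∪ lineUnion ω q (fourProg q (y + δ) m))
        ((⋃ i ∈ I, cyc ω 8 (i + δ)) ∪ lineUnion ω q (fourProg q (y + (δ + 2)) m)) 0 =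
      ∑ i ∈ I, ∑ j ∈ I, (diffCount (cyc ω 8 (i + δ)) (cyc ω 8 (j + (δ + 2))) 0
          + diffCount (cyc ω 8 (i + (δ + 2))) (cyc ω 8 (j + δ)) 0)
        + 4 * m * (4 * m + 1) := by
  have hT : fourProg q (y + (δ + 2)) m ∩ fourProg q (y + δ) m = ∅ :=
    Finset.disjoint_iff_inter_eq_empty.1 (disjoint_fourProg (r := 2 * m + 1) (by omega)
      (by simp only [Int.ModEq]; omega) _ _)
  rw [diffCount_union_add_swap hq hF hω hm hI hpar, sum_diffCount_fourProg_zero hq hF hω hm hy hpar,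
    sum_diffCount_fourProg_zero hq hF hω hm hy hpar, diffCount_lineUnion_zero hq hF hω,
    diffCount_lineUnion_zero hq hF hω, hT, Finset.inter_comm, hT, hm]
  simp only [Finset.card_empty, mul_zero, add_zero, show 8 * m + 3 - 1 = 8 * m + 2 by omega]
  ring

theorem diffCount_union_add_swap_of_mem (hq : IsPrimePow q) (hF : Fintype.card F = q ^ 2)
    (hω : IsPrimitiveRoot ω (Fintype.card F - 1)) (hm : q = 8 * m + 3) (hI : I ⊆ Finset.range 8)
    (hy : y ∈ I) (hIcard : #I = 3) (hpar : ∀ i ∈ I, i ≠ y → i % 2 ≠ y % 2) (δ : ℤ) {x : F}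
    {j₀ : ZMod (q + 1)} (hx : x ∈ lineClass ω q j₀) :
    (diffCount ((⋃ i ∈ I, cyc ω 8 (i + δ)) ∪ lineUnion ω q (fourProg q (y + (δ + 2)) m))
        ((⋃ i ∈ I, cyc ω 8 (i + (δ + 2))) ∪ lineUnion ω q (fourProg q (y + δ) m)) x
      + diffCount ((⋃ i ∈ I, cyc ω 8 (i + (δ + 2))) ∪ lineUnion ω q (fourProg q (y + δ) m))
        ((⋃ i ∈ I, cyc ω 8 (i + δ)) ∪ lineUnion ω q (fourProg q (y + (δ + 2)) m)) x : ℤ) =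
      ∑ i ∈ I, ∑ j ∈ I, (diffCount (cyc ω 8 (i + δ)) (cyc ω 8 (j + (δ + 2))) x
          + diffCount (cyc ω 8 (i + (δ + 2))) (cyc ω 8 (j + δ)) x)
        + 14 * m ^ 2 + 4 * m
        - m * ∑ i ∈ I, ((if j₀ ∈ fourProg q (i + δ) (2 * m + 1) then 1 else 0)
          + (if j₀ ∈ fourProg q (i + (δ + 2)) (2 * m + 1) then 1 else 0)) := by
  have hr : q + 1 = 4 * (2 * m + 1) := by omega
  have hT : fourProg q (y + (δ + 2)) m ∩ fourProg q (y + δ) m = ∅ :=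
    Finset.disjoint_iff_inter_eq_empty.1
      (disjoint_fourProg hr (by simp only [Int.ModEq]; omega) _ _)
  rw [← Nat.cast_add, diffCount_union_add_swap hq hF hω hm hI hpar]
  push_cast
  rw [sum_diffCount_fourProg_of_mem hq hF hω hm hy hIcard hpar _ hx,
    sum_diffCount_fourProg_of_mem hq hF hω hm hy hIcard hpar _ hx,
    diffCount_lineUnion_of_mem hq hF hω hx, diffCount_lineUnion_of_mem hq hF hω hx, hT,
    Finset.inter_comm, hT, card_fourProg hr _ (by omega), card_fourProg hr _ (by omega),
    Finset.sum_add_distrib]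
  simp only [Finset.card_empty, Finset.notMem_empty, if_false]
  push_cast
  ring

end Pairs

theorem mod_two_ne_of_filter_eq_singleton {I : Finset ℕ} {y : ℕ}
    (h : I.filter (fun z => Odd z) = {y} ∨ I.filter (fun z => Even z) = {y}) :
    ∀ i ∈ I, i ≠ y → i % 2 ≠ y % 2 := by
  intro i hi hiy hmod
  rcases h with h | h
  all_goals
    have hyI := h ▸ Finset.mem_singleton_self y
    rw [Finset.mem_filter] at hyI
    refine hiy (Finset.mem_singleton.1 (h ▸ Finset.mem_filter.2 ⟨hi, ?_⟩))
  · rw [Nat.odd_iff] at hyI ⊢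
    omega
  · rw [Nat.even_iff] at hyI ⊢
    omega

theorem stmt_11 (q m : ℕ) (hq : IsPrimePow q) (hm : q = 8 * m + 3)
    (F : Type*) [Field F] [Fintype F] (hF : Fintype.card F = q ^ 2)
    (ω : F) (hω : ∀ x : F, x ≠ 0 → ∃ k : ℕ, x = ω ^ k)
    (I : Finset ℕ) (hI : I ⊆ Finset.range 8) (hIcard : I.card = 3)
    (y : ℕ) (hy : y ∈ I)
    (hyuniq : I.filter (fun z => Odd z) = {y} ∨ I.filter (fun z => Even z) = {y}) :
    let L : ℕ → Set F := fun i => cyc ω (q + 1) i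
    let J₁ : Finset ℕ := (Finset.range m).image fun i => (y + 2 + 4 * i) % (q + 1)
    let J₂ : Finset ℕ := (Finset.range m).image fun i => (y + 4 * i) % (q + 1)
    let E₀ : Set F := (⋃ i ∈ I, cyc ω 8 i) ∪ ⋃ j ∈ J₁, L j
    let E₁ : Set F := (⋃ i ∈ I, cyc ω 8 (i + 2)) ∪ ⋃ j ∈ J₂, L j
    let E₂ : Set F := (⋃ i ∈ I, cyc ω 8 (i + 1)) ∪ ⋃ j ∈ J₁, L (j + 1)
    let E₃ : Set F := (⋃ i ∈ I, cyc ω 8 (i + 3)) ∪ ⋃ j ∈ J₂, L (j + 1)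
    ∀ x : F,
      (x = 0 →
        diffCount E₀ E₁ x + diffCount E₁ E₀ x + diffCount E₂ E₃ x + diffCount E₃ E₂ x
          = (∑ h ∈ Finset.range 2, ∑ i ∈ I, ∑ j ∈ I,
              (diffCount (cyc ω 8 (i + h)) (cyc ω 8 (j + 2 + h)) x
                + diffCount (cyc ω 8 (i + 2 + h)) (cyc ω 8 (j + h)) x))
            + 8 * m * (4 * m + 1)) ∧
      (x ≠ 0 →
        diffCount E₀ E₁ x + diffCount E₁ E₀ x + diffCount E₂ E₃ x + diffCount E₃ E₂ x
          = (∑ h ∈ Finset.range 2, ∑ i ∈ I, ∑ j ∈ I,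
              (diffCount (cyc ω 8 (i + h)) (cyc ω 8 (j + 2 + h)) x
                + diffCount (cyc ω 8 (i + 2 + h)) (cyc ω 8 (j + h)) x))
            + m * (28 * m + 5)) := by
  intro L J₁ J₂ E₀ E₁ E₂ E₃ x
  have hprim := isPrimitiveRoot_of_forall_exists_pow (by rw [hF, hm]; nlinarith) hω
  have hpar := mod_two_ne_of_filter_eq_singleton hyuniq
  have hJ₁ := iUnion_cyc_image_mod_eq_lineUnion (ω := ω) (q := q) (y + 2) m 0
  have hJ₂ := iUnion_cyc_image_mod_eq_lineUnion (ω := ω) (q := q) y m 0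
  have hJ₁' := iUnion_cyc_image_mod_eq_lineUnion (ω := ω) (q := q) (y + 2) m 1
  have hJ₂' := iUnion_cyc_image_mod_eq_lineUnion (ω := ω) (q := q) y m 1
  simp only [add_assoc, Int.reduceAdd, Nat.cast_add, Nat.cast_ofNat, add_zero]
    at hJ₁ hJ₂ hJ₁' hJ₂'
  -- `E₀, E₁` and `E₂, E₃` become the sets of `diffCount_union_add_swap` at `δ = 0` and `δ = 1`.
  simp only [E₀, E₁, E₂, E₃, J₁, J₂, L, Finset.sum_range_succ, Finset.sum_range_zero, add_assoc,
    Int.reduceAdd, Nat.cast_add, Nat.cast_one, Nat.cast_zero, add_zero, zero_add,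
    hJ₁, hJ₂, hJ₁', hJ₂']
  refine ⟨fun hx => ?_, fun hx => ?_⟩
  · subst hx
    have h₀ := diffCount_union_add_swap_zero hq hF hprim hm hI hy hpar 0
    have h₁ := diffCount_union_add_swap_zero hq hF hprim hm hI hy hpar 1
    simp only [Int.reduceAdd, add_zero, zero_add] at h₀ h₁
    linarith
  · obtain ⟨j₀, hj₀⟩ := exists_mem_lineClass (q := q) hprim hx
    have h₀ := diffCount_union_add_swap_of_mem hq hF hprim hm hI hy hIcard hpar 0 hj₀
    have h₁ := diffCount_union_add_swap_of_mem hq hF hprim hm hI hy hIcard hpar 1 hj₀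
    simp only [Int.reduceAdd, add_zero, zero_add] at h₀ h₁
    have hcount := sum_ite_mem_fourProg (r := 2 * m + 1) (by omega) j₀ I
    rw [hIcard] at hcount
    zify
    push_cast at h₀ h₁ hcount
    linear_combination h₀ + h₁ - m * hcount
end

section
/- Let q ≡ 3 (mod 8) be a prime power, let F be a finite field with q² elements with primitive element ω, and let D = C₀⁽⁸⁾ ∪ C₂⁽⁸⁾ ∪ C₃⁽⁸⁾ ⊆ F. Then |ωD ∩ (ω³D + 1)| + |ω³D ∩ (ωD + 1)| = |ω⁻¹D ∩ (ωD + 1)| + |ωD ∩ (ω⁻¹D + 1)|, where for a subset X ⊆ F and c ∈ F, cX = {cx : x ∈ X} and X + 1 = {x + 1 : x ∈ X}. -/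
/-!
Since `q² = |F|`, the Frobenius map `σ x = x ^ q` is a field automorphism of order two, and it
sends `Cᵢ⁽⁸⁾` to `C₃ᵢ⁽⁸⁾` because `q ≡ 3 (mod 8)`. Hence `σ` fixes `ωD = C₁ ∪ C₃ ∪ C₄` and maps
`ω³D = C₃ ∪ C₅ ∪ C₆` onto `ω⁻¹D = C₇ ∪ C₁ ∪ C₂`. As `σ` commutes with `x ↦ x + 1`, it matches the
first term on the left with the second on the right, and the second on the left with the first
on the right.
-/

section Cyc

variable {F : Type*} [Field F] (ω : F) {N : ℕ}

theorem cyc_eq_of_modEq {i j : ℤ} (h : i ≡ j [ZMOD N]) : cyc ω N i = cyc ω N j := by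
  obtain ⟨m, hm⟩ := (Int.modEq_iff_add_fac).mp h.symm
  ext x
  constructor
  · rintro ⟨k, rfl⟩
    exact ⟨k + m, by rw [hm]; ring_nf⟩
  · rintro ⟨k, rfl⟩
    exact ⟨k - m, by rw [hm]; ring_nf⟩

theorem image_zpow_mul_cyc (hω : ω ≠ 0) (j i : ℤ) :
    (fun x => ω ^ j * x) '' cyc ω N i = cyc ω N (j + i) := by
  ext x
  constructor
  · rintro ⟨_, ⟨k, rfl⟩, rfl⟩
    exact ⟨k, by dsimp only; rw [← zpow_add₀ hω, add_assoc]⟩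
  · rintro ⟨k, rfl⟩
    exact ⟨_, ⟨k, rfl⟩, by dsimp only; rw [← zpow_add₀ hω, add_assoc]⟩

theorem image_pow_cyc_subset (q : ℕ) (i : ℤ) :
    (fun x => x ^ q) '' cyc ω N i ⊆ cyc ω N (q * i) := by
  rintro _ ⟨_, ⟨k, rfl⟩, rfl⟩
  exact ⟨q * k, by dsimp only; rw [← zpow_natCast, ← zpow_mul]; ring_nf⟩

theorem image_pow_cyc_of_modEq {q : ℕ} {r : ℤ} (hinv : ∀ x : F, (x ^ q) ^ q = x)
    (hq : (q : ℤ) ≡ r [ZMOD N]) (hr : r * r ≡ 1 [ZMOD N]) (i : ℤ) :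
    (fun x => x ^ q) '' cyc ω N i = cyc ω N (r * i) := by
  have hqi : ∀ i : ℤ, cyc ω N (q * i) = cyc ω N (r * i) := fun i =>
    cyc_eq_of_modEq ω (hq.mul_right i)
  refine (hqi i ▸ image_pow_cyc_subset ω q i).antisymm fun x hx => ⟨x ^ q, ?_, hinv x⟩
  have := image_pow_cyc_subset ω q (r * i) ⟨x, hx, rfl⟩
  rwa [hqi, ← mul_assoc, cyc_eq_of_modEq ω ((hr.mul_right i).trans (by rw [one_mul]))] at this

end Cyc

theorem ncard_image_inter_image_add_one {R S : Type*} [NonAssocSemiring R] [NonAssocSemiring S]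
    (σ : R →+* S) (hσ : Function.Injective σ) (A B : Set R) :
    (σ '' A ∩ (fun x => x + 1) '' (σ '' B)).ncard = (A ∩ (fun x => x + 1) '' B).ncard := by
  have hcomm : (fun x => x + 1) '' (σ '' B) = σ '' ((fun x => x + 1) '' B) := by
    simp only [Set.image_image, map_add, map_one]
  rw [hcomm, ← Set.image_inter hσ, Set.ncard_image_of_injective _ hσ]

theorem ne_zero_of_forall_eq_pow {F : Type*} [Field F] [Fintype F] {ω : F}
    (hω : ∀ x : F, x ≠ 0 → ∃ k : ℕ, x = ω ^ k) (hF : 2 < Fintype.card F) : ω ≠ 0 := by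
  rintro rfl
  classical
  have hsub : (Finset.univ : Finset F) ⊆ {0, 1} := fun x _ => by
    by_cases hx : x = 0
    · simp [hx]
    · obtain ⟨k, rfl⟩ := hω x hx
      rcases k with _ | k <;> simp
  have := Finset.card_le_card hsub
  rw [Finset.card_univ] at this
  exact absurd (this.trans Finset.card_le_two) hF.not_ge

theorem exists_ringHom_image_cyc_eq_mul_three {q : ℕ} (hq : IsPrimePow q) (h8 : q % 8 = 3)
    {F : Type*} [Field F] [Fintype F] (hF : Fintype.card F = q ^ 2) (ω : F) :
    ∃ σ : F →+* F, ∀ i, σ '' cyc ω 8 i = cyc ω 8 (3 * i) := by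
  obtain ⟨p, n, hp, -, rfl⟩ := hq
  have : Fact p.Prime := ⟨hp.nat_prime⟩
  have : CharP F p := charP_of_card_eq_prime_pow (by rw [hF, ← pow_mul])
  have hinv (x : F) : (x ^ p ^ n) ^ p ^ n = x := by
    rw [← pow_mul, ← sq, ← hF, FiniteField.pow_card]
  exact ⟨iterateFrobenius F p n,
    image_pow_cyc_of_modEq ω hinv (by rw [Int.ModEq]; omega) (by decide)⟩

theorem stmt_14 (q : ℕ) (hq : IsPrimePow q) (h8 : q % 8 = 3)
    (F : Type*) [Field F] [Fintype F] (hF : Fintype.card F = q ^ 2)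
    (ω : F) (hω : ∀ x : F, x ≠ 0 → ∃ k : ℕ, x = ω ^ k) :
    let D : Set F := cyc ω 8 0 ∪ cyc ω 8 2 ∪ cyc ω 8 3
    ((fun x => ω * x) '' D ∩ ((fun x => x + 1) '' ((fun x => ω ^ 3 * x) '' D))).ncard
      + ((fun x => ω ^ 3 * x) '' D ∩ ((fun x => x + 1) '' ((fun x => ω * x) '' D))).ncard
    = ((fun x => ω ^ (-1 : ℤ) * x) '' D ∩ ((fun x => x + 1) '' ((fun x => ω * x) '' D))).ncard
      + ((fun x => ω * x) '' D ∩
          ((fun x => x + 1) '' ((fun x => ω ^ (-1 : ℤ) * x) '' D))).ncard := by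
  intro D
  obtain ⟨σ, hσ⟩ := exists_ringHom_image_cyc_eq_mul_three hq h8 hF ω
  have hω0 : ω ≠ 0 := ne_zero_of_forall_eq_pow hω (by rw [hF]; nlinarith [Nat.mod_le q 8])
  have hD (j : ℤ) : (fun x => ω ^ j * x) '' D = cyc ω 8 j ∪ cyc ω 8 (j + 2) ∪ cyc ω 8 (j + 3) := by
    simp only [D, Set.image_union, image_zpow_mul_cyc ω hω0, add_zero]
  have hωD : σ '' ((fun x => ω * x) '' D) = (fun x => ω * x) '' D := by
    rw [← zpow_one ω, hD, Set.image_union, Set.image_union, hσ, hσ, hσ]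
    norm_num only
    rw [cyc_eq_of_modEq ω (show (9 : ℤ) ≡ 1 [ZMOD 8] by decide),
      cyc_eq_of_modEq ω (show (12 : ℤ) ≡ 4 [ZMOD 8] by decide)]
    ac_rfl
  have hω3D : σ '' ((fun x => ω ^ 3 * x) '' D) = (fun x => ω ^ (-1 : ℤ) * x) '' D := by
    rw [← zpow_natCast, hD, hD, Set.image_union, Set.image_union, hσ, hσ, hσ]
    norm_num only
    rw [cyc_eq_of_modEq ω (show (9 : ℤ) ≡ 1 [ZMOD 8] by decide),
      cyc_eq_of_modEq ω (show (15 : ℤ) ≡ -1 [ZMOD 8] by decide),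
      cyc_eq_of_modEq ω (show (18 : ℤ) ≡ 2 [ZMOD 8] by decide)]
    ac_rfl
  rw [add_comm]
  congr 1 <;> rw [← ncard_image_inter_image_add_one σ σ.injective, hωD, hω3D]
end

section
/- Let q be a positive integer with q ≡ 3 (mod 8). Then there exist integers a and b with q² = a² + 2b², a ≡ 1 (mod 4), and either 3q = a + 4b + 16 or 3q = a − 4b + 16, if and only if there exists an integer c with q = 12c² + 4c + 3. Moreover, when q = 12c² + 4c + 3, one may take a = 4c² + 12c + 1 and b = ±(8c² − 2). -/
/-!
Solving `3q = a ± 4b + 16` for `a` and substituting into `q² = a² + 2b²` gives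
`(2q - 3b - 12)² = 8(b + 2)`. Hence `2q - 3b - 12 = 4f` and `b = 2f² - 2`, so
`q = 3f² + 2f + 3`; as `q` is odd, `f = 2c` is even and `q = 12c² + 4c + 3`.
-/

lemma Int.exists_eq_two_mul_of_sq_eq_two_mul {x y : ℤ} (h : x ^ 2 = 2 * y) :
    ∃ m, x = 2 * m ∧ y = 2 * m ^ 2 := by
  obtain ⟨m, rfl⟩ : Even x := (Int.even_pow.mp ⟨y, by rw [h]; ring⟩).1
  exact ⟨m, (two_mul m).symm, by linarith⟩

lemma Int.exists_eq_four_mul_of_sq_eq_eight_mul {x n : ℤ} (h : x ^ 2 = 8 * n) :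
    ∃ f, x = 4 * f ∧ n = 2 * f ^ 2 := by
  obtain ⟨g, rfl, hg⟩ := Int.exists_eq_two_mul_of_sq_eq_two_mul (y := 4 * n) (by rw [h]; ring)
  obtain ⟨f, rfl, hf⟩ := Int.exists_eq_two_mul_of_sq_eq_two_mul (x := g) (y := n) (by linarith)
  exact ⟨f, by ring, hf⟩

lemma exists_eq_of_sq_eq_sq_add_two_mul_sq {q b : ℤ} (hq : Odd q)
    (h : q ^ 2 = (3 * q - 4 * b - 16) ^ 2 + 2 * b ^ 2) :
    ∃ c : ℤ, q = 12 * c ^ 2 + 4 * c + 3 := by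
  have hsq : (2 * q - 3 * b - 12) ^ 2 = 8 * (b + 2) := by linarith
  obtain ⟨f, hf, hb⟩ := Int.exists_eq_four_mul_of_sq_eq_eight_mul hsq
  have hqf : q = 3 * f ^ 2 + 2 * f + 3 := by linarith
  obtain ⟨c, rfl⟩ | ⟨k, rfl⟩ := Int.even_or_odd f
  · exact ⟨c, by rw [hqf]; ring⟩
  · exact absurd ⟨6 * k ^ 2 + 8 * k + 4, by rw [hqf]; ring⟩ (Int.not_even_iff_odd.mpr hq)

theorem stmt_15_general (q : ℤ) (h8 : q % 8 = 3) :
    ((∃ a b : ℤ, q ^ 2 = a ^ 2 + 2 * b ^ 2 ∧ a % 4 = 1 ∧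
        (3 * q = a + 4 * b + 16 ∨ 3 * q = a - 4 * b + 16)) ↔
      ∃ c : ℤ, q = 12 * c ^ 2 + 4 * c + 3) ∧
    ∀ c : ℤ, q = 12 * c ^ 2 + 4 * c + 3 →
      q ^ 2 = (4 * c ^ 2 + 12 * c + 1) ^ 2 + 2 * (8 * c ^ 2 - 2) ^ 2 ∧
      (4 * c ^ 2 + 12 * c + 1) % 4 = 1 ∧
      (3 * q = (4 * c ^ 2 + 12 * c + 1) + 4 * (8 * c ^ 2 - 2) + 16 ∨
        3 * q = (4 * c ^ 2 + 12 * c + 1) - 4 * (8 * c ^ 2 - 2) + 16) := by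
  have witness : ∀ c : ℤ, q = 12 * c ^ 2 + 4 * c + 3 →
      q ^ 2 = (4 * c ^ 2 + 12 * c + 1) ^ 2 + 2 * (8 * c ^ 2 - 2) ^ 2 ∧
      (4 * c ^ 2 + 12 * c + 1) % 4 = 1 ∧
      (3 * q = (4 * c ^ 2 + 12 * c + 1) + 4 * (8 * c ^ 2 - 2) + 16 ∨
        3 * q = (4 * c ^ 2 + 12 * c + 1) - 4 * (8 * c ^ 2 - 2) + 16) := by
    rintro c rfl
    refine ⟨by ring, ?_, Or.inl (by ring)⟩
    rw [show 4 * c ^ 2 + 12 * c + 1 = 1 + 4 * (c ^ 2 + 3 * c) by ring, Int.add_mul_emod_self_left]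
    rfl
  have hq : Odd q := Int.odd_iff.mpr (by omega)
  refine ⟨⟨?_, fun ⟨c, hc⟩ => ⟨_, _, witness c hc⟩⟩, witness⟩
  rintro ⟨a, b, h, -, hab | hab⟩
  · obtain rfl : a = 3 * q - 4 * b - 16 := by linarith
    exact exists_eq_of_sq_eq_sq_add_two_mul_sq hq h
  · obtain rfl : a = 3 * q - 4 * (-b) - 16 := by linarith
    exact exists_eq_of_sq_eq_sq_add_two_mul_sq (b := -b) hq (by linear_combination h)

theorem stmt_15 (q : ℤ) (hq : 0 < q) (h8 : q % 8 = 3) :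
    ((∃ a b : ℤ, q ^ 2 = a ^ 2 + 2 * b ^ 2 ∧ a % 4 = 1 ∧
        (3 * q = a + 4 * b + 16 ∨ 3 * q = a - 4 * b + 16)) ↔
      ∃ c : ℤ, q = 12 * c ^ 2 + 4 * c + 3) ∧
    ∀ c : ℤ, q = 12 * c ^ 2 + 4 * c + 3 →
      q ^ 2 = (4 * c ^ 2 + 12 * c + 1) ^ 2 + 2 * (8 * c ^ 2 - 2) ^ 2 ∧
      (4 * c ^ 2 + 12 * c + 1) % 4 = 1 ∧
      (3 * q = (4 * c ^ 2 + 12 * c + 1) + 4 * (8 * c ^ 2 - 2) + 16 ∨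
        3 * q = (4 * c ^ 2 + 12 * c + 1) - 4 * (8 * c ^ 2 - 2) + 16) :=
  stmt_15_general q h8
end

section
/- Let G be a finite abelian group of order v. Suppose there exist subsets B₀, B₁, B₂, B₃ ⊆ G with |Bᵢ| = kᵢ and an integer λ with k₀ + k₁ + k₂ + k₃ − v = λ such that for every nonzero g ∈ G, N(B₀,B₀;g) + N(B₁,B₁;g) + N(B₂,B₂;g) + N(B₃,B₃;g) = λ (i.e., {B₀,B₁,B₂,B₃} is a difference family of type H in G). Then there exists a Hadamard matrix of order 4v, i.e., a 4v × 4v integer matrix H with all entries equal to 1 or −1 such that H · Hᵀ = 4v · I. -/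
open Matrix

section GoethalsSeidel

variable {S : Type*} [Ring S] [StarRing S]

def goethalsSeidelArray (A B C D R : S) : Matrix (Fin 4) (Fin 4) S :=
  !![A, B * R, C * R, D * R;
     -(B * R), A, star D * R, -(star C * R);
     -(C * R), -(star D * R), A, star B * R;
     -(D * R), star C * R, -(star B * R), A]

theorem goethalsSeidelArray_mul_conjTranspose {K : Set S}
    (hK : ∀ x ∈ K, ∀ y ∈ K, x * y = y * x) (hK_star : ∀ x ∈ K, star x ∈ K)
    {R : S} (hR : star R = R) (hRR : R * R = 1) (hRK : ∀ x ∈ K, R * x = star x * R)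
    {A B C D : S} (hA : A ∈ K) (hB : B ∈ K) (hC : C ∈ K) (hD : D ∈ K) :
    goethalsSeidelArray A B C D R * (goethalsSeidelArray A B C D R)ᴴ =
      diagonal fun _ => A * star A + B * star B + C * star C + D * star D := by
  have hRK' : ∀ x ∈ K, ∀ y, R * (x * y) = star x * (R * y) := fun x hx y => by
    rw [← mul_assoc, hRK x hx, mul_assoc]
  have hK' : ∀ x ∈ K, ∀ y ∈ K, ∀ z, x * (y * z) = y * (x * z) := fun x hx y hy z => by
    rw [← mul_assoc, hK x hx y hy, mul_assoc]
  ext i j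
  -- Move every `R` to the right with `R x = star x * R`, cancel `R * R`, then sort factors in `K`.
  fin_cases i <;> fin_cases j <;>
    simp [goethalsSeidelArray, mul_apply, Fin.sum_univ_four, star_mul, hR, mul_assoc, hRR,
      hA, hB, hC, hD, hK_star, hRK, hRK', hK, hK'] <;>
    abel

end GoethalsSeidel

def Matrix.IsSignMatrix {m n : Type*} (M : Matrix m n ℤ) : Prop :=
  ∀ i j, M i j = 1 ∨ M i j = -1

namespace Matrix.IsSignMatrix

variable {m n : Type*} {M : Matrix m n ℤ}

theorem transpose (hM : M.IsSignMatrix) : Mᵀ.IsSignMatrix := fun i j => hM j i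

theorem star {M : Matrix n n ℤ} (hM : M.IsSignMatrix) : (star M).IsSignMatrix := by
  rw [star_eq_conjTranspose, conjTranspose_eq_transpose_of_trivial]
  exact hM.transpose

theorem submatrix {l o : Type*} (hM : M.IsSignMatrix) (f : l → m) (g : o → n) :
    (M.submatrix f g).IsSignMatrix := fun i j => hM (f i) (g j)

theorem mul_permMatrix [Fintype n] [DecidableEq n] (hM : M.IsSignMatrix) (σ : Equiv.Perm n) :
    (M * σ.permMatrix ℤ).IsSignMatrix := by
  rw [PEquiv.mul_toMatrix_toPEquiv]
  exact hM.submatrix _ _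

theorem comp {I J K L : Type*} {M : Matrix I J (Matrix K L ℤ)}
    (hM : ∀ i j, (M i j).IsSignMatrix) : (comp I J K L ℤ M).IsSignMatrix :=
  fun p q => hM p.1 q.1 p.2 q.2

end Matrix.IsSignMatrix

@[simp]
theorem Matrix.isSignMatrix_neg {m n : Type*} {M : Matrix m n ℤ} :
    (-M).IsSignMatrix ↔ M.IsSignMatrix := by
  simp only [IsSignMatrix, neg_apply, neg_eq_iff_eq_neg, neg_neg, or_comm]

theorem Matrix.isSignMatrix_circulant {G : Type*} [Sub G] {f : G → ℤ}
    (hf : ∀ x, f x = 1 ∨ f x = -1) : (circulant f).IsSignMatrix :=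
  fun x y => hf (x - y)

section GroupDeveloped

variable {G R : Type*} [AddCommGroup G] [CommRing R]

theorem negPermMatrix_mul_self [DecidableEq G] [Fintype G] :
    (Equiv.neg G).permMatrix R * (Equiv.neg G).permMatrix R = 1 := by
  rw [← permMatrix_mul, show Equiv.neg G * Equiv.neg G = 1 from Equiv.ext neg_neg, permMatrix_one]

variable [StarRing R]

theorem star_circulant [TrivialStar R] (f : G → R) :
    star (circulant f) = circulant fun x => f (-x) := by
  rw [star_eq_conjTranspose, conjTranspose_circulant, star_trivial]

theorem star_negPermMatrix [DecidableEq G] :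
    star ((Equiv.neg G).permMatrix R) = (Equiv.neg G).permMatrix R := by
  rw [star_eq_conjTranspose, conjTranspose_permMatrix]
  rfl

variable [DecidableEq G] [Fintype G] [TrivialStar R]

theorem negPermMatrix_mul_circulant (f : G → R) :
    (Equiv.neg G).permMatrix R * circulant f = star (circulant f) * (Equiv.neg G).permMatrix R := by
  rw [PEquiv.toMatrix_toPEquiv_mul, PEquiv.mul_toMatrix_toPEquiv, star_circulant]
  ext x y
  simp [circulant_apply, neg_add_eq_sub]

theorem goethalsSeidelArray_circulant_mul_conjTranspose (f₀ f₁ f₂ f₃ : G → R) :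
    let W := goethalsSeidelArray (circulant f₀) (circulant f₁) (circulant f₂) (circulant f₃)
      ((Equiv.neg G).permMatrix R)
    W * Wᴴ = diagonal fun _ => circulant f₀ * star (circulant f₀) +
      circulant f₁ * star (circulant f₁) + circulant f₂ * star (circulant f₂) +
      circulant f₃ * star (circulant f₃) :=
  goethalsSeidelArray_mul_conjTranspose (K := Set.range circulant)
    (by rintro _ ⟨f, rfl⟩ _ ⟨g, rfl⟩; exact circulant_mul_comm f g)
    (by rintro _ ⟨f, rfl⟩; exact ⟨_, (star_circulant f).symm⟩)
    star_negPermMatrix negPermMatrix_mul_self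
    (by rintro _ ⟨f, rfl⟩; exact negPermMatrix_mul_circulant f)
    ⟨f₀, rfl⟩ ⟨f₁, rfl⟩ ⟨f₂, rfl⟩ ⟨f₃, rfl⟩

end GroupDeveloped

theorem isSignMatrix_goethalsSeidelArray_circulant {G : Type*} [AddCommGroup G] [Fintype G]
    [DecidableEq G] {f₀ f₁ f₂ f₃ : G → ℤ}
    (h₀ : ∀ x, f₀ x = 1 ∨ f₀ x = -1) (h₁ : ∀ x, f₁ x = 1 ∨ f₁ x = -1)
    (h₂ : ∀ x, f₂ x = 1 ∨ f₂ x = -1) (h₃ : ∀ x, f₃ x = 1 ∨ f₃ x = -1) (i j : Fin 4) :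
    (goethalsSeidelArray (circulant f₀) (circulant f₁) (circulant f₂) (circulant f₃)
      ((Equiv.neg G).permMatrix ℤ) i j).IsSignMatrix := by
  fin_cases i <;> fin_cases j <;>
    simp [goethalsSeidelArray, IsSignMatrix.mul_permMatrix, IsSignMatrix.star,
      isSignMatrix_circulant h₀, isSignMatrix_circulant h₁, isSignMatrix_circulant h₂,
      isSignMatrix_circulant h₃]

theorem Matrix.comp_mul_conjTranspose_comp {I J R : Type*} [Fintype I] [Fintype J] [Semiring R]
    [StarRing R] (W : Matrix I I (Matrix J J R)) :
    comp I I J J R W * (comp I I J J R W)ᴴ = comp I I J J R (W * Wᴴ) := by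
  rw [conjTranspose_comp', ← compRingEquiv_apply, ← compRingEquiv_apply, ← map_mul,
    compRingEquiv_apply]

theorem Matrix.exists_fin_isSignMatrix_mul_transpose {ι : Type*} [Fintype ι] [DecidableEq ι]
    {n : ℕ} (hn : Fintype.card ι = n) {M : Matrix ι ι ℤ} (hM : M.IsSignMatrix) {c : ℤ}
    (hMM : M * Mᵀ = c • 1) :
    ∃ H : Matrix (Fin n) (Fin n) ℤ, (∀ i j, H i j = 1 ∨ H i j = -1) ∧ H * Hᵀ = c • 1 := by
  let e := Fintype.equivFinOfCardEq hn
  refine ⟨reindex e e M, hM.submatrix _ _, ?_⟩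
  rw [transpose_reindex, reindex_apply, reindex_apply, submatrix_mul_equiv, hMM,
    smul_one_eq_diagonal, submatrix_diagonal_equiv, smul_one_eq_diagonal]
  rfl

open Classical in
noncomputable def signVector {α : Type*} (B : Set α) (x : α) : ℤ := if x ∈ B then -1 else 1

theorem signVector_eq_one_or_eq_neg_one {α : Type*} (B : Set α) (x : α) :
    signVector B x = 1 ∨ signVector B x = -1 := by
  unfold signVector; split_ifs <;> simp

section DifferenceFamily

variable {G : Type*} [AddCommGroup G]

theorem diffCount_self_zero (B : Set G) : diffCount B B 0 = B.ncard := by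
  rw [diffCount, ← Set.ncard_image_of_injective B (f := fun b => (b, b))
    fun a b h => congr_arg Prod.fst h]
  congr 1
  ext ⟨p, q⟩
  simp only [Set.mem_ofPred_eq, Set.mem_image, Prod.mk.injEq, sub_eq_zero]
  aesop

theorem diffCount_self_sub (B : Set G) (x y : G) :
    diffCount B B (x - y) = {z | x - z ∈ B ∧ y - z ∈ B}.ncard := by
  rw [diffCount, ← Set.ncard_image_of_injective _
    (f := fun z => (x - z, y - z)) fun z w h => by simpa using congr_arg Prod.fst h]
  congr 1
  ext ⟨p, q⟩
  simp only [Set.mem_ofPred_eq, Set.mem_image, Prod.mk.injEq]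
  constructor
  · rintro ⟨hp, hq, hpq⟩
    have hz : y - (x - p) = q := by rw [← sub_sub_cancel p q, hpq]; abel
    exact ⟨x - p, ⟨by rwa [sub_sub_cancel], by rwa [hz]⟩, sub_sub_cancel x p, hz⟩
  · rintro ⟨z, ⟨hx, hy⟩, rfl, rfl⟩
    exact ⟨hx, hy, by abel⟩

variable [Fintype G]

theorem sum_signVector_mul_signVector (B : Set G) (x y : G) :
    ∑ z, signVector B (x - z) * signVector B (y - z) =
      Fintype.card G - 4 * B.ncard + 4 * diffCount B B (x - y) := by
  classical
  have hpoint : ∀ a b, signVector B a * signVector B b =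
      1 - 2 * (if a ∈ B then 1 else 0) - 2 * (if b ∈ B then 1 else 0) +
        4 * (if a ∈ B ∧ b ∈ B then 1 else 0) := by
    intro a b; unfold signVector; split_ifs <;> simp_all
  have hcard : ∀ w : G, ∑ z, (if w - z ∈ B then (1 : ℤ) else 0) = B.ncard := by
    intro w
    rw [Fintype.sum_equiv (Equiv.subLeft w) (fun z => if w - z ∈ B then (1 : ℤ) else 0)
      (fun z => if z ∈ B then (1 : ℤ) else 0) (fun _ => rfl), Finset.sum_boole,
      Set.ncard_eq_toFinset_card']
    simp
  have hpair : ∑ z, (if x - z ∈ B ∧ y - z ∈ B then (1 : ℤ) else 0) = diffCount B B (x - y) := by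
    rw [diffCount_self_sub, Finset.sum_boole, Set.ncard_eq_toFinset_card']
    simp
  simp only [hpoint, Finset.sum_add_distrib, Finset.sum_sub_distrib, ← Finset.mul_sum, hcard,
    hpair, Finset.sum_const, Finset.card_univ, Int.nsmul_eq_mul, mul_one]
  ring

theorem circulant_signVector_mul_star_apply (B : Set G) (x y : G) :
    (circulant (signVector B) * star (circulant (signVector B))) x y =
      Fintype.card G - 4 * B.ncard + 4 * diffCount B B (x - y) := by
  rw [← sum_signVector_mul_signVector]
  simp [mul_apply, circulant_apply]

theorem sum_circulant_signVector_mul_star [DecidableEq G] {B₀ B₁ B₂ B₃ : Set G}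
    (hB : ∀ g : G, g ≠ 0 →
      (diffCount B₀ B₀ g + diffCount B₁ B₁ g + diffCount B₂ B₂ g + diffCount B₃ B₃ g : ℤ) =
        B₀.ncard + B₁.ncard + B₂.ncard + B₃.ncard - Fintype.card G) :
    circulant (signVector B₀) * star (circulant (signVector B₀)) +
        circulant (signVector B₁) * star (circulant (signVector B₁)) +
        circulant (signVector B₂) * star (circulant (signVector B₂)) +
        circulant (signVector B₃) * star (circulant (signVector B₃)) =
      (4 * Fintype.card G : ℤ) • 1 := by
  ext x y
  simp only [Matrix.add_apply, circulant_signVector_mul_star_apply, Matrix.smul_apply, one_apply,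
    smul_eq_mul]
  split_ifs with hxy
  · simp only [hxy, sub_self, diffCount_self_zero]
    ring
  · linear_combination 4 * hB (x - y) (sub_ne_zero.mpr hxy)

end DifferenceFamily

theorem stmt_17 (v : ℕ)
    (G : Type*) [AddCommGroup G] [Fintype G] (hG : Fintype.card G = v)
    (B₀ B₁ B₂ B₃ : Set G) (k₀ k₁ k₂ k₃ : ℕ) (lam : ℤ)
    (hB₀ : B₀.ncard = k₀) (hB₁ : B₁.ncard = k₁) (hB₂ : B₂.ncard = k₂)
    (hB₃ : B₃.ncard = k₃)
    (hlam : (k₀ : ℤ) + k₁ + k₂ + k₃ - v = lam)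
    (hDF : ∀ g : G, g ≠ 0 →
      (diffCount B₀ B₀ g + diffCount B₁ B₁ g + diffCount B₂ B₂ g + diffCount B₃ B₃ g : ℤ)
        = lam) :
    ∃ H : Matrix (Fin (4 * v)) (Fin (4 * v)) ℤ,
      (∀ i j, H i j = 1 ∨ H i j = -1) ∧
      H * H.transpose = (4 * v : ℤ) • 1 := by
  classical
  subst hG hlam hB₀ hB₁ hB₂ hB₃
  have hsign := signVector_eq_one_or_eq_neg_one (α := G)
  let W := goethalsSeidelArray (circulant (signVector B₀)) (circulant (signVector B₁))
    (circulant (signVector B₂)) (circulant (signVector B₃)) ((Equiv.neg G).permMatrix ℤ)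
  have hWW : W * Wᴴ = diagonal fun _ => (4 * Fintype.card G : ℤ) • (1 : Matrix G G ℤ) := by
    rw [goethalsSeidelArray_circulant_mul_conjTranspose, sum_circulant_signVector_mul_star hDF]
  refine exists_fin_isSignMatrix_mul_transpose (by simp)
    (IsSignMatrix.comp (isSignMatrix_goethalsSeidelArray_circulant
      (hsign B₀) (hsign B₁) (hsign B₂) (hsign B₃))) ?_
  rw [← conjTranspose_eq_transpose_of_trivial, comp_mul_conjTranspose_comp, hWW,
    smul_one_eq_diagonal, comp_diagonal_diagonal, smul_one_eq_diagonal]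
end
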